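/- arXiv:2501.12605 — 12 statements merged into one kernel-verified Lean document; each statement's English description precedes it below -/
import Mathlib

section
/- Let H be a complex Hilbert space and let T be a bounded normal linear operator on H. If the spectrum of T contains no root of unity, i.e. σ(T) ∩ G = ∅, then the only periodic point of T is 0, i.e. P(T) = {0}. -/
/-- If `T` is a bounded normal operator on a complex Hilbert space `H` whose spectrum
contains no root of unity, then the only periodic point of `T` is `0`. -/
theorem normal_no_root_of_unity_in_spectrum_periodic_points_trivial
    {H : Type*} [NormedAddCommGroup H] [InnerProductSpace ℂ H] [CompleteSpace H]
    (T : H →L[ℂ] H) (hT : IsStarNormal T)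
    (hspec : ∀ z ∈ spectrum ℂ T, ¬ ∃ k : ℕ, 0 < k ∧ z ^ k = 1) :
    {x : H | ∃ m : ℕ, 0 < m ∧ (T ^ m) x = x} = {0} := by
  ext x
  simp only [Set.mem_setOf_eq, Set.mem_singleton_iff]
  constructor
  · rintro ⟨m, hm, hx⟩
    have h1 : (1 : ℂ) ∉ spectrum ℂ (T ^ m) := by
      rw [spectrum.map_pow_of_pos T hm]
      rintro ⟨z, hz, hzm⟩
      exact hspec z hz ⟨m, hm, hzm⟩
    have hunit : IsUnit ((1 : H →L[ℂ] H) - T ^ m) := by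
      simpa [spectrum.mem_iff, Algebra.algebraMap_eq_smul_one] using h1
    have : ((1 : H →L[ℂ] H) - T ^ m) x = 0 := by
      simp [ContinuousLinearMap.sub_apply, hx]
    obtain ⟨u, hu⟩ := hunit
    have := congrArg (fun y => (↑u⁻¹ : H →L[ℂ] H) y) (hu ▸ this)
    simpa [← ContinuousLinearMap.comp_apply, ← ContinuousLinearMap.mul_def,
      ← hu] using this
  · rintro rfl
    exact ⟨1, one_pos, by simp⟩
end

section
/- Let H be an infinite-dimensional separable complex Hilbert space. There exists a bounded normal (in fact unitary) operator S on H such that P(S) = {0} while σ(S) ∩ G ≠ ∅; indeed one may take S diagonal with S e_n = e^{2πi(q_n+√2)} e_n, where {q_n} enumerates ℚ ∩ [0,1), and then σ(S) is the whole unit circle. -/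
/-!
Take `S` diagonal in the basis `e`, with eigenvalues `exp (2πi (q + √2))` for `q` running through
`ℚ`. Since `q + √2` is irrational no eigenvalue is a root of unity, and as the powers of `S` act
coordinatewise, no nonzero vector is periodic. On the other hand the eigenvalues are dense in the
unit circle and the spectrum is closed, so the spectrum is the whole circle, which contains `1`.
-/

open Complex Real Set Metric
open scoped ENNReal

noncomputable section

lemma norm_smul_of_norm_eq_one {𝕜 E : Type*} [NormedField 𝕜] [SeminormedAddCommGroup E]
    [NormedSpace 𝕜 E] {c : 𝕜} (hc : ‖c‖ = 1) (x : E) : ‖c • x‖ = ‖x‖ := by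
  rw [norm_smul, hc, one_mul]

namespace lp

variable {ι 𝕜 : Type*} [NormedField 𝕜] {E : ι → Type*} [∀ i, NormedAddCommGroup (E i)]
  [∀ i, NormedSpace 𝕜 (E i)] {p : ℝ≥0∞} [Fact (1 ≤ p)]

def diagonal (c : ι → 𝕜) (hc : ∀ i, ‖c i‖ = 1) : lp E p ≃ₗᵢ[𝕜] lp E p where
  toFun x := ⟨fun i => c i • x i,
    (lp.memℓp x).mono' fun i => (norm_smul_of_norm_eq_one (hc i) (x i)).le⟩
  invFun x := ⟨fun i => (c i)⁻¹ • x i,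
    (lp.memℓp x).mono' fun i => by rw [norm_smul, norm_inv, hc, inv_one, one_mul]⟩
  map_add' x y := lp.ext <| funext fun i => smul_add (c i) (x i) (y i)
  map_smul' a x := lp.ext <| funext fun i => smul_comm (c i) a (x i)
  left_inv x := lp.ext <| funext fun i =>
    inv_smul_smul₀ (norm_ne_zero_iff.mp ((hc i).trans_ne one_ne_zero)) (x i)
  right_inv x := lp.ext <| funext fun i =>
    smul_inv_smul₀ (norm_ne_zero_iff.mp ((hc i).trans_ne one_ne_zero)) (x i)
  norm_map' x :=
    have hp : p ≠ 0 := (zero_lt_one.trans_le Fact.out).ne'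
    le_antisymm (lp.norm_mono hp fun i => (norm_smul_of_norm_eq_one (hc i) (x i)).le)
      (lp.norm_mono hp fun i => (norm_smul_of_norm_eq_one (hc i) (x i)).ge)

@[simp]
lemma diagonal_apply (c : ι → 𝕜) (hc : ∀ i, ‖c i‖ = 1) (x : lp E p) (i : ι) :
    diagonal c hc x i = c i • x i :=
  rfl

end lp

namespace HilbertBasis

variable {ι 𝕜 H : Type*} [RCLike 𝕜] [NormedAddCommGroup H] [InnerProductSpace 𝕜 H]
  [CompleteSpace H] (b : HilbertBasis ι 𝕜 H) (c : ι → 𝕜) (hc : ∀ i, ‖c i‖ = 1)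

def diagonal : unitary (H →L[𝕜] H) :=
  Unitary.linearIsometryEquiv.symm (b.repr.trans ((lp.diagonal c hc).trans b.repr.symm))

@[simp]
lemma repr_diagonal_apply (x : H) (i : ι) :
    b.repr ((b.diagonal c hc : H →L[𝕜] H) x) i = c i * b.repr x i := by
  simp [diagonal]

lemma repr_diagonal_pow_apply (m : ℕ) (x : H) (i : ι) :
    b.repr (((b.diagonal c hc : H →L[𝕜] H) ^ m) x) i = c i ^ m * b.repr x i := by
  induction m generalizing x with
  | zero => simp
  | succ m ih => rw [pow_succ, mul_apply_eq_comp, ih, repr_diagonal_apply, pow_succ, mul_assoc]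

lemma diagonal_apply_self (i : ι) : (b.diagonal c hc : H →L[𝕜] H) (b i) = c i • b i := by
  classical
  refine b.repr.injective (lp.ext <| funext fun j => ?_)
  rcases eq_or_ne j i with rfl | hji
  · simp [b.repr_self]
  · simp [b.repr_self, Pi.single_eq_of_ne hji]

lemma closure_range_subset_spectrum_diagonal :
    closure (range c) ⊆ spectrum 𝕜 (b.diagonal c hc : H →L[𝕜] H) := by
  refine (spectrum.isClosed _).closure_subset_iff.mpr ?_
  rintro _ ⟨i, rfl⟩
  rw [ContinuousLinearMap.spectrum_eq]
  have heigen : Module.End.HasEigenvector (b.diagonal c hc : H →L[𝕜] H) (c i) (b i) :=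
    ⟨Module.End.mem_eigenspace_iff.mpr (b.diagonal_apply_self c hc i), b.orthonormal.ne_zero i⟩
  exact (Module.End.hasEigenvalue_of_hasEigenvector heigen).mem_spectrum

lemma periodicPts_diagonal (hroot : ∀ i m, 0 < m → c i ^ m ≠ 1) :
    {x : H | ∃ m : ℕ, 0 < m ∧ ((b.diagonal c hc : H →L[𝕜] H) ^ m) x = x} = {0} := by
  refine subset_antisymm ?_ fun x hx => ⟨1, one_pos, by simp [mem_singleton_iff.mp hx]⟩
  rintro x ⟨m, hm, hx⟩
  refine b.repr.injective (lp.ext <| funext fun i => ?_)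
  have hfix : (c i ^ m - 1) * b.repr x i = 0 := by
    rw [sub_mul, one_mul, ← b.repr_diagonal_pow_apply c hc m x i, hx, sub_self]
  simpa using (mul_eq_zero.mp hfix).resolve_left (sub_ne_zero.mpr (hroot i m hm))

end HilbertBasis

lemma exp_two_pi_mul_I_pow_ne_one {t : ℝ} (ht : Irrational t) {m : ℕ} (hm : m ≠ 0) :
    exp (↑(2 * π * t) * I) ^ m ≠ 1 := by
  rw [← Complex.exp_nat_mul, Ne, Complex.exp_eq_one_iff]
  rintro ⟨k, hk⟩
  have h2πI : 2 * π * I ≠ 0 := by simp [pi_ne_zero, I_ne_zero]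
  have : ((m * t : ℝ) : ℂ) = k :=
    mul_right_cancel₀ h2πI (by push_cast at hk ⊢; linear_combination hk)
  exact (ht.natCast_mul hm).ne_int k (by exact_mod_cast this)

lemma sphere_subset_closure_range_exp_rat_add (a : ℝ) :
    sphere (0 : ℂ) 1 ⊆ closure (range fun r : ℚ => exp (↑(2 * π * (r + a)) * I)) := by
  have hcont : Continuous fun t : ℝ => exp (↑(2 * π * (t + a)) * I) := by fun_prop
  have hdense := hcont.range_subset_closure_image_dense Rat.denseRange_cast
  rw [← range_comp] at hdense
  rw [← range_exp_mul_I]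
  rintro _ ⟨θ, rfl⟩
  refine hdense ⟨θ / (2 * π) - a, ?_⟩
  simp only [sub_add_cancel, mul_div_cancel₀ θ two_pi_pos.ne']

end

/-- On an infinite-dimensional separable complex Hilbert space there exists a normal
(in fact unitary) operator `S` whose only periodic point is `0`, while the spectrum of `S`
does meet the roots of unity; in fact the spectrum is the whole unit circle. -/
theorem exists_unitary_trivial_periodic_points_spectrum_meets_roots_of_unity
    {H : Type*} [NormedAddCommGroup H] [InnerProductSpace ℂ H] [CompleteSpace H]
    (e : HilbertBasis ℕ ℂ H) :
    ∃ S : H →L[ℂ] H, S ∈ unitary (H →L[ℂ] H) ∧ IsStarNormal S ∧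
      {x : H | ∃ m : ℕ, 0 < m ∧ (S ^ m) x = x} = {0} ∧
      (spectrum ℂ S ∩ {z : ℂ | ∃ k : ℕ, 0 < k ∧ z ^ k = 1}).Nonempty ∧
      spectrum ℂ S = Metric.sphere (0 : ℂ) 1 := by
  obtain ⟨q, hq⟩ := exists_surjective_nat ℚ
  set g : ℚ → ℂ := fun r => exp (↑(2 * π * (r + √2)) * I)
  set c : ℕ → ℂ := g ∘ q
  have hc (n : ℕ) : ‖c n‖ = 1 := norm_exp_ofReal_mul_I _
  set U := e.diagonal c hc
  have hrange : range c = range g := hq.range_comp g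
  have hspec : spectrum ℂ (U : H →L[ℂ] H) = sphere 0 1 := by
    refine subset_antisymm (spectrum.subset_circle_of_unitary U.2) ?_
    calc sphere (0 : ℂ) 1 ⊆ closure (range c) :=
          hrange ▸ sphere_subset_closure_range_exp_rat_add √2
      _ ⊆ spectrum ℂ (U : H →L[ℂ] H) := e.closure_range_subset_spectrum_diagonal c hc
  have hroot (n m : ℕ) (hm : 0 < m) : c n ^ m ≠ 1 :=
    exp_two_pi_mul_I_pow_ne_one (irrational_sqrt_two.ratCast_add (q n)) hm.ne'
  exact ⟨U, U.2, isStarNormal_of_mem_unitary U.2, e.periodicPts_diagonal c hc hroot,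
    ⟨1, by simp [hspec], 1, one_pos, one_pow 1⟩, hspec⟩
end

section
/- Let H be an infinite-dimensional separable complex Hilbert space and let T be a bounded normal operator on H with P(T) = H. Then: (a) there exists an orthonormal basis {u_n}_{n∈ℕ} of H and complex numbers c_n with T(u_n) = c_n u_n for all n; (b) σ(T) = {c_n : n ∈ ℕ} is a finite subset of G; (c) T is unitary; and (d) there exists a positive integer N (namely the least common multiple of the orders of the c_n) such that T^N = I. -/
/-!
By the Baire category theorem, one of the closed subspaces `ker (T ^ m - 1)` has interior, hence
is everything: `T ^ N = 1` for some `N > 0`. As `X ^ N - 1` splits over `ℂ` into distinct linear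
factors, `H` is the sum of the eigenspaces of `T`, which are closed and, `T` being normal, mutually
orthogonal; so the Hilbert bases of the eigenspaces combine into one of `H`, countably infinite
because `H` is separable and infinite-dimensional. The spectrum is contained in the `N`-th roots of
unity (spectral mapping for `X ^ N - 1`) and in the eigenvalues (spectral mapping for the product of
`X - c` over the finitely many eigenvalues `c`, which annihilates `T`). A normal operator with
spectrum on the unit circle is unitary.
-/

open Module End

theorem ContinuousLinearMap.exists_pow_eq_one_of_forall_exists_pow_apply_eq
    {𝕜 E : Type*} [NontriviallyNormedField 𝕜] [NormedAddCommGroup E] [NormedSpace 𝕜 E]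
    [CompleteSpace E] (T : E →L[𝕜] E) (h : ∀ x, ∃ m, 0 < m ∧ (T ^ m) x = x) :
    ∃ N, 0 < N ∧ T ^ N = 1 := by
  have mem_ker {m : ℕ} {x : E} : x ∈ (T ^ m - 1).ker ↔ (T ^ m) x = x := by
    rw [LinearMap.mem_ker, coe_coe, sub_apply, one_apply_eq_self, sub_eq_zero]
  have hcover : ⋃ m, ((T ^ (m + 1) - 1).ker : Set E) = Set.univ := by
    refine Set.eq_univ_of_forall fun x => ?_
    obtain ⟨m, hm, hx⟩ := h x
    obtain ⟨k, rfl⟩ := Nat.exists_eq_add_of_lt hm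
    exact Set.mem_iUnion.2 ⟨k, mem_ker.2 (by simpa using hx)⟩
  obtain ⟨m, hm⟩ := nonempty_interior_of_iUnion_of_closed
    (fun m => (T ^ (m + 1) - 1).isClosed_ker) hcover
  have htop := Submodule.eq_top_of_nonempty_interior' _ hm
  exact ⟨m + 1, m.succ_pos, ContinuousLinearMap.ext fun x => mem_ker.1 (htop ▸ trivial)⟩

section Polynomial

open Polynomial

theorem spectrum.eval_eq_zero_of_aeval_eq_zero {𝕜 A : Type*} [Field 𝕜] [Ring A] [Algebra 𝕜 A]
    {a : A} {p : 𝕜[X]} (hp : aeval a p = 0) {z : 𝕜} (hz : z ∈ spectrum 𝕜 a) : p.eval z = 0 := by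
  cases subsingleton_or_nontrivial A
  · simp [spectrum.of_subsingleton] at hz
  simpa [hp] using spectrum.subset_polynomial_aeval a p ⟨z, hz, rfl⟩

theorem Module.End.iSup_eigenspace_eq_ker_aeval_prod {K M : Type*} [Field K] [AddCommGroup M]
    [Module K M] [DecidableEq K] (f : End K M) (s : Finset K) :
    ⨆ μ ∈ s, f.eigenspace μ = LinearMap.ker (aeval f (∏ μ ∈ s, (X - C μ))) := by
  induction s using Finset.induction_on with
  | empty => simp [Module.End.one_eq_id]
  | insert a s ha ih =>
    have hcop : IsCoprime (X - C a) (∏ μ ∈ s, (X - C μ)) :=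
      IsCoprime.prod_right fun μ hμ => isCoprime_X_sub_C_of_isUnit_sub
        (sub_ne_zero.2 (ne_of_mem_of_not_mem hμ ha).symm).isUnit
    rw [Finset.iSup_insert, ih, Finset.prod_insert ha,
      ← Polynomial.sup_ker_aeval_eq_ker_aeval_mul_of_coprime f hcop, eigenspace_def]
    simp [Algebra.algebraMap_eq_smul_one]

theorem Module.End.iSup_eigenspace_eq_top_of_pow_eq_one {K M : Type*} [Field K] [AddCommGroup M]
    [Module K M] {f : End K M} {N : ℕ} {ζ : K} (hζ : IsPrimitiveRoot ζ N) (hN : 0 < N)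
    (hf : f ^ N = 1) : ⨆ μ, f.eigenspace μ = ⊤ := by
  classical
  refine eq_top_iff.2 (le_trans ?_ (iSup₂_le_iSup (· ∈ nthRootsFinset N (1 : K)) _))
  rw [iSup_eigenspace_eq_ker_aeval_prod, ← X_pow_sub_one_eq_prod hN hζ]
  simp [hf]

section ContinuousLinearMap

variable {R M : Type*} [CommRing R] [AddCommGroup M] [Module R M] [TopologicalSpace M]
  [IsTopologicalAddGroup M] [ContinuousConstSMul R M] {T : M →L[R] M} {x : M} {μ : R}

theorem ContinuousLinearMap.aeval_apply_of_apply_eq_smul (hx : T x = μ • x) (p : R[X]) :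
    aeval T p x = p.eval μ • x := by
  induction p using Polynomial.induction_on with
  | C a => simp [Algebra.algebraMap_eq_smul_one]
  | add p q hp hq => simp [hp, hq, add_smul]
  | monomial n a ih =>
    rw [pow_succ, ← mul_assoc, map_mul, aeval_X, mul_apply_eq_comp, hx, map_smul, ih, eval_mul_X,
      smul_smul, mul_comm]

theorem ContinuousLinearMap.mem_spectrum_of_apply_eq_smul (hx0 : x ≠ 0) (hx : T x = μ • x) :
    μ ∈ spectrum R T := by
  rintro ⟨U, hU⟩
  have h0 : (algebraMap R (M →L[R] M) μ - T) x = 0 := by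
    simp [Algebra.algebraMap_eq_smul_one, hx]
  apply hx0
  simpa [hU, h0, eq_comm] using congr($(U.inv_mul) x)

end ContinuousLinearMap

end Polynomial

theorem Complex.mem_unitary_of_pow_eq_one {z : ℂ} {N : ℕ} (hN : N ≠ 0) (hz : z ^ N = 1) :
    z ∈ unitary ℂ := by
  rw [Unitary.mem_iff_star_mul_self, RCLike.star_def, Complex.conj_mul',
    Complex.norm_eq_one_of_pow_eq_one hz hN]
  simp

section InnerProduct

variable {𝕜 E ι : Type*} [RCLike 𝕜] [NormedAddCommGroup E] [InnerProductSpace 𝕜 E]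

theorem IsStarNormal.adjoint_apply_eq_of_apply_eq_smul [CompleteSpace E] {T : E →L[𝕜] E}
    (hT : IsStarNormal T) {x : E} {μ : 𝕜} (hx : T x = μ • x) :
    ContinuousLinearMap.adjoint T x = star μ • x := by
  have hcomm : Commute T (star (μ • 1)) := by
    rw [star_smul, star_one]
    exact (Commute.one_right T).smul_right _
  have hnormal : IsStarNormal (T - μ • 1) := hcomm.isStarNormal_sub (hb := .smul _ _)
  have h := (ContinuousLinearMap.IsStarNormal.adjoint_apply_eq_zero_iff hnormal x).2
    (by simp [hx])
  simpa [sub_eq_zero, ← ContinuousLinearMap.star_eq_adjoint] using h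

theorem IsStarNormal.orthogonalFamily_eigenspaces [CompleteSpace E] {T : E →L[𝕜] E}
    (hT : IsStarNormal T) :
    OrthogonalFamily 𝕜 (fun μ => eigenspace (T : End 𝕜 E) μ)
      fun μ => (eigenspace (T : End 𝕜 E) μ).subtypeₗᵢ := by
  rintro μ ν hμν ⟨v, hv⟩ ⟨w, hw⟩
  rw [mem_eigenspace_iff, ContinuousLinearMap.coe_coe] at hv hw
  have h := T.adjoint_inner_left w v
  rw [hT.adjoint_apply_eq_of_apply_eq_smul hv, hw, inner_smul_left, inner_smul_right] at h
  simpa [hμν] using h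

theorem Orthonormal.countable [TopologicalSpace.SeparableSpace E] {v : ι → E}
    (hv : Orthonormal 𝕜 v) : Countable ι := by
  have hdist {i j : ι} (hij : i ≠ j) : dist (v i) (v j) = √2 := by
    rw [dist_eq_norm, ← Real.sqrt_sq (norm_nonneg _), norm_sub_sq (𝕜 := 𝕜), hv.1 i, hv.1 j,
      hv.2 hij]
    norm_num
  refine Pairwise.countable_of_isOpen_disjoint (s := fun i => Metric.ball (v i) (√2 / 2))
    (fun i j hij => Metric.ball_disjoint_ball ?_) (fun _ => Metric.isOpen_ball)
    (fun _ => Metric.nonempty_ball.2 (by positivity))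
  rw [hdist hij]
  linarith

theorem HilbertBasis.separableSpace [Countable ι] (b : HilbertBasis ι 𝕜 E) :
    TopologicalSpace.SeparableSpace E := by
  rw [← TopologicalSpace.isSeparable_univ_iff, ← Submodule.top_coe (R := 𝕜), ← b.dense_span,
    Submodule.topologicalClosure_coe]
  exact ((Set.countable_range b).isSeparable.span (R := 𝕜)).closure

theorem HilbertBasis.nonempty_equiv_nat (b : HilbertBasis ι 𝕜 E) (e : HilbertBasis ℕ 𝕜 E) :
    Nonempty (ι ≃ ℕ) := by
  have := e.separableSpace
  have := b.orthonormal.countable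
  have : Infinite ι := by
    refine not_finite_iff_infinite.1 fun _ => ?_
    have := Fintype.ofFinite ι
    have := Module.Finite.of_basis b.toOrthonormalBasis.toBasis
    exact e.orthonormal.linearIndependent.finite.false
  exact (nonempty_denumerable ι).map fun d => @Denumerable.eqv ι d

theorem exists_hilbertBasis_of_orthogonalFamily [CompleteSpace E] {F : ι → Submodule 𝕜 E}
    [∀ i, CompleteSpace (F i)] (hF : OrthogonalFamily 𝕜 (fun i => F i) fun i => (F i).subtypeₗᵢ)
    (htop : ⊤ ≤ (⨆ i, F i).topologicalClosure) :
    ∃ (w : ∀ i, Set (F i)) (b : HilbertBasis (Σ i, w i) 𝕜 E), ∀ a, b a = (a.2 : F a.1) := by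
  choose w b hb using fun i => exists_hilbertBasis 𝕜 (F i)
  let v : (Σ i, w i) → E := fun a => (a.2 : F a.1)
  have hv : Orthonormal 𝕜 v := by
    simpa [hb] using hF.orthonormal_sigma_orthonormal fun i => (b i).orthonormal
  have hle (i : ι) : F i ≤ (Submodule.span 𝕜 (Set.range v)).topologicalClosure := by
    intro x hx
    have hspan : (Submodule.span 𝕜 (Set.range (b i))).map (F i).subtype ≤
        Submodule.span 𝕜 (Set.range v) := by
      rw [Submodule.map_span]
      refine Submodule.span_mono ?_
      rintro _ ⟨_, ⟨y, rfl⟩, rfl⟩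
      exact ⟨⟨i, y⟩, by simp [v, hb]⟩
    have hmaps : Set.MapsTo ((↑) : F i → E) (Submodule.span 𝕜 (Set.range (b i)))
        (Submodule.span 𝕜 (Set.range v)) := fun y hy => hspan (Submodule.mem_map_of_mem hy)
    have := map_mem_closure continuous_subtype_val
      (by rw [← Submodule.topologicalClosure_coe, (b i).dense_span]; trivial) hmaps
      (x := ⟨x, hx⟩)
    rwa [← Submodule.topologicalClosure_coe] at this
  refine ⟨w, HilbertBasis.mk hv (htop.trans ?_), fun a => by simp [v]⟩
  exact Submodule.topologicalClosure_minimal _ (iSup_le hle)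
    (Submodule.isClosed_topologicalClosure _)

theorem IsStarNormal.exists_hilbertBasis_nat_eigenvectors [CompleteSpace E] {T : E →L[𝕜] E}
    (hT : IsStarNormal T) (htop : ⨆ μ, eigenspace (T : End 𝕜 E) μ = ⊤)
    (e : HilbertBasis ℕ 𝕜 E) :
    ∃ (u : HilbertBasis ℕ 𝕜 E) (c : ℕ → 𝕜), ∀ n, T (u n) = c n • u n := by
  have (μ : 𝕜) : CompleteSpace (eigenspace (T : End 𝕜 E) μ) :=
    (T.isClosed_eigenspace μ).completeSpace_coe
  obtain ⟨w, b, hb⟩ := exists_hilbertBasis_of_orthogonalFamily hT.orthogonalFamily_eigenspaces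
    (htop ▸ Submodule.le_topologicalClosure _)
  obtain ⟨g⟩ := b.nonempty_equiv_nat e
  have hdense : ⊤ ≤ (Submodule.span 𝕜 (Set.range (b ∘ g.symm))).topologicalClosure := by
    rw [g.symm.surjective.range_comp, b.dense_span]
  refine ⟨HilbertBasis.mk (b.orthonormal.comp _ g.symm.injective) hdense, fun n => (g.symm n).1,
    fun n => ?_⟩
  rw [HilbertBasis.coe_mk, Function.comp_apply, hb]
  exact mem_eigenspace_iff.1 (g.symm n).2.1.2

open Polynomial in
theorem HilbertBasis.spectrum_eq_range_of_apply_eq_smul (u : HilbertBasis ι 𝕜 E) {T : E →L[𝕜] E}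
    {c : ι → 𝕜} (hu : ∀ i, T (u i) = c i • u i) (hc : (Set.range c).Finite) :
    spectrum 𝕜 T = Set.range c := by
  classical
  refine subset_antisymm (fun z hz => ?_) ?_
  · have hp : aeval T (∏ μ ∈ hc.toFinset, (X - C μ)) = 0 := by
      refine ContinuousLinearMap.ext_on
        (Submodule.dense_iff_topologicalClosure_eq_top.2 u.dense_span) ?_
      rintro _ ⟨i, rfl⟩
      rw [ContinuousLinearMap.aeval_apply_of_apply_eq_smul (hu i), eval_prod,
        Finset.prod_eq_zero (hc.mem_toFinset.2 ⟨i, rfl⟩) (by simp)]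
      simp
    obtain ⟨μ, hμ, hzμ⟩ := Finset.prod_eq_zero_iff.1
      (eval_prod _ _ z ▸ spectrum.eval_eq_zero_of_aeval_eq_zero hp hz)
    rw [eval_sub, eval_X, eval_C, sub_eq_zero] at hzμ
    exact hzμ ▸ hc.mem_toFinset.1 hμ
  · rintro _ ⟨i, rfl⟩
    exact ContinuousLinearMap.mem_spectrum_of_apply_eq_smul (u.orthonormal.ne_zero i) (hu i)

end InnerProduct

open Polynomial in
/-- A bounded normal operator `T` on an infinite-dimensional separable complex Hilbert space
all of whose points are periodic is diagonalizable with respect to some orthonormal basis,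
its spectrum is a finite set of roots of unity (the set of eigenvalues), `T` is unitary,
and `T ^ N = 1` for some positive integer `N`. -/
theorem normal_with_all_points_periodic_structure
    {H : Type*} [NormedAddCommGroup H] [InnerProductSpace ℂ H] [CompleteSpace H]
    (e : HilbertBasis ℕ ℂ H)
    (T : H →L[ℂ] H) (hT : IsStarNormal T)
    (hP : {x : H | ∃ m : ℕ, 0 < m ∧ (T ^ m) x = x} = Set.univ) :
    ∃ (u : HilbertBasis ℕ ℂ H) (c : ℕ → ℂ),
      (∀ n, T (u n) = c n • u n) ∧
      spectrum ℂ T = Set.range c ∧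
      (Set.range c).Finite ∧
      Set.range c ⊆ {z : ℂ | ∃ k : ℕ, 0 < k ∧ z ^ k = 1} ∧
      T ∈ unitary (H →L[ℂ] H) ∧
      ∃ N : ℕ, 0 < N ∧ T ^ N = 1 := by
  obtain ⟨N, hN, hTN⟩ :=
    T.exists_pow_eq_one_of_forall_exists_pow_apply_eq (Set.eq_univ_iff_forall.1 hP)
  have hspec : spectrum ℂ T ⊆ {z | z ^ N = 1} := fun z hz => by
    have := spectrum.eval_eq_zero_of_aeval_eq_zero (p := X ^ N - 1) (by simp [hTN]) hz
    rwa [eval_sub, eval_pow, eval_X, eval_one, sub_eq_zero] at this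
  have htop : ⨆ μ, eigenspace (T : End ℂ H) μ = ⊤ :=
    iSup_eigenspace_eq_top_of_pow_eq_one (Complex.isPrimitiveRoot_exp N hN.ne') hN
      (by rw [← ContinuousLinearMap.toLinearMap_pow, hTN]; rfl)
  obtain ⟨u, c, hu⟩ := hT.exists_hilbertBasis_nat_eigenvectors htop e
  have hc : Set.range c ⊆ {z | z ^ N = 1} := by
    rintro _ ⟨n, rfl⟩
    exact hspec (T.mem_spectrum_of_apply_eq_smul (u.orthonormal.ne_zero n) (hu n))
  have hfin : (Set.range c).Finite := (nthRootsFinset N (1 : ℂ)).finite_toSet.subset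
    fun z hz => (mem_nthRootsFinset hN 1).2 (hc hz)
  refine ⟨u, c, hu, u.spectrum_eq_range_of_apply_eq_smul hu hfin, hfin,
    fun z hz => ⟨N, hN, hc hz⟩, ?_, N, hN, hTN⟩
  exact unitary_iff_isStarNormal_and_spectrum_subset_unitary.2
    ⟨hT, fun z hz => Complex.mem_unitary_of_pow_eq_one hN.ne' (hspec hz)⟩
end

section
/- Let T be a diagonal operator on H with T e_n = α_n e_n for all n, where {α_n} is a bounded sequence of complex numbers. Then P(T) = P(T*) and a vector x = Σ_{n=1}^∞ c_n e_n ∈ H belongs to P(T) if and only if there exists a positive integer k such that α_n^k = 1 for every n with c_n ≠ 0; that is, P(T) = ⋃_{k∈ℕ} {Σ c_n e_n ∈ H : α_n^k = 1 whenever c_n ≠ 0}. -/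
open scoped InnerProductSpace

/-- If `S` acts diagonally on coordinates with eigenvalue function `β`, then periodic
points of `S` are exactly the vectors supported where some power of `β` is `1`. -/
lemma diag_periodic_aux
    {H : Type*} [NormedAddCommGroup H] [InnerProductSpace ℂ H] [CompleteSpace H]
    (e : HilbertBasis ℕ ℂ H) (β : ℕ → ℂ) (S : H →L[ℂ] H)
    (h : ∀ x n, e.repr (S x) n = β n * e.repr x n) :
    {x : H | ∃ m : ℕ, 0 < m ∧ (S ^ m) x = x}
      = {x : H | ∃ k : ℕ, 0 < k ∧ ∀ n, e.repr x n ≠ 0 → β n ^ k = 1} := by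
  have hpow : ∀ (m : ℕ) (x : H) (n : ℕ), e.repr ((S ^ m) x) n = β n ^ m * e.repr x n := by
    intro m
    induction m with
    | zero => intro x n; simp
    | succ m ih =>
      intro x n
      have : (S ^ (m + 1)) x = (S ^ m) (S x) := by
        rw [pow_succ]; rfl
      rw [this, ih, h, pow_succ]
      ring
  ext x
  simp only [Set.mem_setOf_eq]
  constructor
  · rintro ⟨m, hm, hx⟩
    refine ⟨m, hm, fun n hn => ?_⟩
    have := hpow m x n
    rw [hx] at this
    have h2 : (β n ^ m - 1) * e.repr x n = 0 := by
      rw [sub_mul, one_mul, ← this]; ring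
    rcases mul_eq_zero.1 h2 with h3 | h3
    · exact sub_eq_zero.1 h3
    · exact absurd h3 hn
  · rintro ⟨k, hk, hβ⟩
    refine ⟨k, hk, ?_⟩
    apply e.repr.injective
    apply lp.ext
    funext n
    rw [hpow k x n]
    by_cases hn : e.repr x n = 0
    · rw [hn]; ring
    · rw [hβ n hn, one_mul]

/-- For a diagonal operator `T e_n = α_n • e_n`, the periodic points of `T` coincide with
those of the adjoint `T*`, and a vector is periodic iff there is a positive integer `k`
such that `α_n ^ k = 1` whenever its `n`-th coordinate is nonzero. -/
theorem diagonal_periodic_points_characterization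
    {H : Type*} [NormedAddCommGroup H] [InnerProductSpace ℂ H] [CompleteSpace H]
    (e : HilbertBasis ℕ ℂ H) (α : ℕ → ℂ) (T : H →L[ℂ] H)
    (hT : ∀ n, T (e n) = α n • e n) :
    {x : H | ∃ m : ℕ, 0 < m ∧ (T ^ m) x = x}
      = {x : H | ∃ m : ℕ, 0 < m ∧ ((ContinuousLinearMap.adjoint T) ^ m) x = x} ∧
    {x : H | ∃ m : ℕ, 0 < m ∧ (T ^ m) x = x}
      = {x : H | ∃ k : ℕ, 0 < k ∧ ∀ n, e.repr x n ≠ 0 → α n ^ k = 1} := by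
  -- T acts diagonally on coordinates
  have hrepT : ∀ (x : H) (n : ℕ), e.repr (T x) n = α n * e.repr x n := by
    intro x m
    have h1 : HasSum (fun n => e.repr x n • e n) x := e.hasSum_repr x
    have h2 : HasSum (fun n => e.repr x n • (α n • e n)) (T x) := by
      simpa [hT] using h1.mapL T
    have h3 : HasSum (fun n => (⟪e m, e.repr x n • (α n • e n)⟫_ℂ))
        (⟪e m, T x⟫_ℂ) := h2.mapL (innerSL ℂ (e m))
    have horth := e.orthonormal
    have h4 : (fun n => (⟪e m, e.repr x n • (α n • e n)⟫_ℂ))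
        = fun n => if n = m then α m * e.repr x m else 0 := by
      funext n
      rw [inner_smul_right, inner_smul_right, orthonormal_iff_ite.1 horth]
      by_cases hnm : m = n
      · subst hnm; simp; ring
      · simp [hnm, Ne.symm hnm]
    rw [h4] at h3
    have h5 : HasSum (fun n => if n = m then α m * e.repr x m else 0)
        (α m * e.repr x m) := hasSum_ite_eq m _
    have := h5.unique h3
    rw [e.repr_apply_apply, ← this]
  -- T* acts diagonally with conjugated eigenvalues
  have hrepAdj : ∀ (x : H) (n : ℕ),
      e.repr ((ContinuousLinearMap.adjoint T) x) n = (starRingEnd ℂ) (α n) * e.repr x n := by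
    intro x n
    rw [e.repr_apply_apply, e.repr_apply_apply,
      ContinuousLinearMap.adjoint_inner_right, hT, inner_smul_left]
  have hA := diag_periodic_aux e α T hrepT
  have hB := diag_periodic_aux e (fun n => (starRingEnd ℂ) (α n))
    (ContinuousLinearMap.adjoint T) hrepAdj
  have hconj : {x : H | ∃ k : ℕ, 0 < k ∧ ∀ n, e.repr x n ≠ 0 →
      ((starRingEnd ℂ) (α n)) ^ k = 1}
      = {x : H | ∃ k : ℕ, 0 < k ∧ ∀ n, e.repr x n ≠ 0 → α n ^ k = 1} := by
    ext x
    simp only [Set.mem_setOf_eq, ← map_pow]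
    constructor <;> rintro ⟨k, hk, h⟩ <;> refine ⟨k, hk, fun n hn => ?_⟩
    · have := h n hn
      have := congrArg (starRingEnd ℂ) this
      simpa using this
    · rw [h n hn]; simp
  constructor
  · rw [hA, hB, hconj]
  · exact hA
end

section
/- Let T be a diagonal operator on H with T e_n = α_n e_n for all n, where {α_n} is a bounded sequence of complex numbers. Then P(T) is closed in H if and only if the set {α_n : n ∈ ℕ} ∩ G is finite. -/
/-!
Periodic points of a bounded operator form a subspace, and for a diagonal operator `T^m x = x`
holds exactly when `α_n ^ m = 1` for every `n` in the support of `x`. If only finitely many roots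
of unity occur among the `α_n`, they have a common order `M`, and the periodic points are the
closed subspace of fixed points of `T^M`. Otherwise `∑_{α_n ∈ G} 2^{-n} e_n` lies in the closure
of the span of the periodic basis vectors, yet it would need one period `m` with `α_n ^ m = 1` for
infinitely many distinct `α_n`.
-/

open Submodule

namespace ContinuousLinearMap

variable {R M : Type*} [Semiring R] [TopologicalSpace M] [AddCommMonoid M] [Module R M]

theorem pow_apply_eq_self_iff_isPeriodicPt {T : M →L[R] M} {m : ℕ} {x : M} :
    (T ^ m) x = x ↔ Function.IsPeriodicPt T m x := by
  rw [pow_apply_eq_iterate]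
  rfl

theorem pow_apply_eq_smul_of_apply_eq_smul {T : M →L[R] M} {a : R} {v : M} (hv : T v = a • v)
    (m : ℕ) : (T ^ m) v = a ^ m • v := by
  induction m with
  | zero => simp
  | succ m ih => rw [pow_succ', mul_apply_eq_comp, ih, map_smul, hv, smul_smul, pow_succ]

def periodicPoints (T : M →L[R] M) : Submodule R M where
  carrier := {x | ∃ m, 0 < m ∧ (T ^ m) x = x}
  add_mem' := by
    rintro x y ⟨a, ha, hx⟩ ⟨b, hb, hy⟩
    simp only [pow_apply_eq_self_iff_isPeriodicPt] at hx hy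
    refine ⟨a * b, Nat.mul_pos ha hb, ?_⟩
    rw [map_add, pow_apply_eq_self_iff_isPeriodicPt.mpr (hx.mul_const b),
      pow_apply_eq_self_iff_isPeriodicPt.mpr (hy.const_mul a)]
  zero_mem' := ⟨1, one_pos, map_zero _⟩
  smul_mem' := by
    rintro c x ⟨m, hm, hx⟩
    exact ⟨m, hm, by rw [map_smul, hx]⟩

end ContinuousLinearMap

theorem Set.Finite.exists_pos_forall_pow_eq_one {G : Type*} [Monoid G] {s : Set G}
    (hs : s.Finite) (hfin : ∀ z ∈ s, IsOfFinOrder z) : ∃ M, 0 < M ∧ ∀ z ∈ s, z ^ M = 1 :=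
  ⟨∏ z ∈ hs.toFinset, orderOf z,
    Finset.prod_pos fun z hz => (hfin z (hs.mem_toFinset.mp hz)).orderOf_pos,
    fun _ hz => orderOf_dvd_iff_pow_eq_one.mp (Finset.dvd_prod_of_mem _ (hs.mem_toFinset.mpr hz))⟩

namespace HilbertBasis

variable {ι 𝕜 E : Type*} [RCLike 𝕜] [NormedAddCommGroup E] [InnerProductSpace 𝕜 E]
  (e : HilbertBasis ι 𝕜 E) {T : E →L[𝕜] E} {β : ι → 𝕜}

theorem repr_apply_of_diagonal (hT : ∀ i, T (e i) = β i • e i) (x : E) (i : ι) :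
    e.repr (T x) i = β i * e.repr x i := by
  classical
  suffices h : (innerSL 𝕜 (e i)).comp T = β i • innerSL 𝕜 (e i) by
    simpa [e.repr_apply_apply] using congr($h x)
  refine ContinuousLinearMap.ext_on (s := Set.range e) ?_ ?_
  · exact dense_iff_topologicalClosure_eq_top.mpr e.dense_span
  · rintro _ ⟨j, rfl⟩
    simp only [ContinuousLinearMap.comp_apply, hT, map_smul, innerSL_apply_apply,
      smul_apply, orthonormal_iff_ite.mp e.orthonormal]
    split_ifs with hij <;> simp [hij]

theorem pow_apply_eq_self_iff_of_diagonal (hT : ∀ i, T (e i) = β i • e i) (m : ℕ) (x : E) :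
    (T ^ m) x = x ↔ ∀ i, e.repr x i ≠ 0 → β i ^ m = 1 := by
  have hTm := e.repr_apply_of_diagonal
    (fun i => T.pow_apply_eq_smul_of_apply_eq_smul (hT i) m) x
  rw [← e.repr.injective.eq_iff, lp.ext_iff, funext_iff]
  refine forall_congr' fun i => ?_
  rw [hTm, mul_left_eq_self₀, or_iff_not_imp_right]

theorem mem_periodicPoints_of_isOfFinOrder (hT : ∀ i, T (e i) = β i • e i) {i : ι}
    (hi : IsOfFinOrder (β i)) : e i ∈ T.periodicPoints := by
  obtain ⟨m, hm, hβ⟩ := isOfFinOrder_iff_pow_eq_one.mp hi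
  exact ⟨m, hm, by rw [T.pow_apply_eq_smul_of_apply_eq_smul (hT i), hβ, one_smul]⟩

theorem isClosed_periodicPoints_of_diagonal (hT : ∀ i, T (e i) = β i • e i) {M : ℕ} (hM : 0 < M)
    (hpow : ∀ i, IsOfFinOrder (β i) → β i ^ M = 1) : IsClosed (T.periodicPoints : Set E) := by
  suffices h : (T.periodicPoints : Set E) = {x | (T ^ M) x = x} from
    h ▸ isClosed_eq (T ^ M).continuous continuous_id
  ext x
  refine ⟨fun ⟨m, hm, hx⟩ => ?_, fun hx => ⟨M, hM, hx⟩⟩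
  show (T ^ M) x = x
  rw [e.pow_apply_eq_self_iff_of_diagonal hT] at hx ⊢
  exact fun i hi => hpow i (isOfFinOrder_iff_pow_eq_one.mpr ⟨m, hm, hx i hi⟩)

theorem exists_mem_closure_span_repr_ne_zero (e : HilbertBasis ℕ 𝕜 E) (s : Set ℕ) :
    ∃ x ∈ (span 𝕜 (e '' s)).topologicalClosure, ∀ i ∈ s, e.repr x i ≠ 0 := by
  set c : ℕ → 𝕜 := s.indicator fun n => 2⁻¹ ^ n
  have hc : Memℓp c 2 := by
    refine Memℓp.of_exponent_ge (q := 1) (memℓp_gen ?_) one_le_two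
    refine summable_geometric_two.of_nonneg_of_le (fun _ => by positivity) fun n => ?_
    simpa [c] using norm_indicator_le_norm_self (s := s) (fun n => (2⁻¹ : 𝕜) ^ n) n
  refine ⟨e.repr.symm ⟨c, hc⟩, ?_, fun i hi => ?_⟩
  · refine mem_closure_of_tendsto (e.hasSum_repr_symm _) (Filter.Eventually.of_forall fun t => ?_)
    refine sum_mem fun i _ => ?_
    by_cases hi : i ∈ s
    · exact smul_mem _ _ (subset_span ⟨i, hi, rfl⟩)
    · simp [c, hi]
  · simp [c, hi]

end HilbertBasis

theorem diagonal_periodic_points_closed_iff_general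
    {H : Type*} [NormedAddCommGroup H] [InnerProductSpace ℂ H]
    (e : HilbertBasis ℕ ℂ H) (α : ℕ → ℂ) (T : H →L[ℂ] H)
    (hT : ∀ n, T (e n) = α n • e n) :
    IsClosed {x : H | ∃ m : ℕ, 0 < m ∧ (T ^ m) x = x}
      ↔ (Set.range α ∩ {z : ℂ | ∃ k : ℕ, 0 < k ∧ z ^ k = 1}).Finite := by
  have hroots : {z : ℂ | ∃ k : ℕ, 0 < k ∧ z ^ k = 1} = {z | IsOfFinOrder z} :=
    Set.ext fun _ => isOfFinOrder_iff_pow_eq_one.symm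
  change IsClosed (T.periodicPoints : Set H) ↔ _
  rw [hroots]
  constructor
  · intro hclosed
    obtain ⟨x, hx, hne⟩ := e.exists_mem_closure_span_repr_ne_zero {n | IsOfFinOrder (α n)}
    have hspan : span ℂ (e '' {n | IsOfFinOrder (α n)}) ≤ T.periodicPoints :=
      span_le.mpr <| Set.image_subset_iff.mpr fun n hn => e.mem_periodicPoints_of_isOfFinOrder hT hn
    obtain ⟨m, hm, hxm⟩ := topologicalClosure_minimal _ hspan hclosed hx
    rw [e.pow_apply_eq_self_iff_of_diagonal hT] at hxm
    refine (Polynomial.nthRootsFinset m (1 : ℂ)).finite_toSet.subset ?_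
    rintro _ ⟨⟨n, rfl⟩, hn⟩
    exact (Polynomial.mem_nthRootsFinset hm 1).mpr (hxm n (hne n hn))
  · intro hfin
    obtain ⟨M, hM, hpow⟩ := hfin.exists_pos_forall_pow_eq_one fun _ hz => hz.2
    exact e.isClosed_periodicPoints_of_diagonal hT hM fun n hn => hpow _ ⟨⟨n, rfl⟩, hn⟩

/-- For a diagonal operator `T e_n = α_n • e_n`, the set of periodic points of `T`
is closed in `H` iff only finitely many of the values `α_n` are roots of unity. -/
theorem diagonal_periodic_points_closed_iff
    {H : Type*} [NormedAddCommGroup H] [InnerProductSpace ℂ H] [CompleteSpace H]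
    (e : HilbertBasis ℕ ℂ H) (α : ℕ → ℂ) (T : H →L[ℂ] H)
    (hT : ∀ n, T (e n) = α n • e n) :
    IsClosed {x : H | ∃ m : ℕ, 0 < m ∧ (T ^ m) x = x}
      ↔ (Set.range α ∩ {z : ℂ | ∃ k : ℕ, 0 < k ∧ z ^ k = 1}).Finite :=
  diagonal_periodic_points_closed_iff_general e α T hT
end

section
/- Let T be a diagonal operator on H with T e_n = α_n e_n for all n, where {α_n} is a bounded sequence of complex numbers. Then P(T) = H if and only if every α_n is a root of unity and sup{order(α_n) : n ∈ ℕ} < ∞. -/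
open scoped InnerProductSpace

/-- For a diagonal operator `T e_n = α_n • e_n`, every point of `H` is periodic iff every
`α_n` is a root of unity and the orders of the `α_n` are uniformly bounded. -/
theorem diagonal_periodic_points_univ_iff
    {H : Type*} [NormedAddCommGroup H] [InnerProductSpace ℂ H] [CompleteSpace H]
    (e : HilbertBasis ℕ ℂ H) (α : ℕ → ℂ) (T : H →L[ℂ] H)
    (hT : ∀ n, T (e n) = α n • e n) :
    {x : H | ∃ m : ℕ, 0 < m ∧ (T ^ m) x = x} = Set.univ
      ↔ (∀ n, ∃ k : ℕ, 0 < k ∧ α n ^ k = 1) ∧ ∃ B : ℕ, ∀ n, orderOf (α n) ≤ B := by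
  have hpow : ∀ (m n : ℕ), (T ^ m) (e n) = α n ^ m • e n := by
    intro m n
    induction m with
    | zero => simp
    | succ m ih =>
      rw [pow_succ, ContinuousLinearMap.mul_apply, hT, map_smul, ih, smul_smul, ← pow_succ']
  have hdense : Dense ((Submodule.span ℂ (Set.range ⇑e) : Submodule ℂ H) : Set H) :=
    Submodule.dense_iff_topologicalClosure_eq_top.mpr e.dense_span
  have hen : ∀ n, (e n : H) ≠ 0 := fun n => e.orthonormal.ne_zero n
  have hinner : ∀ i j : ℕ, ⟪e i, e j⟫_ℂ = if i = j then 1 else 0 :=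
    orthonormal_iff_ite.mp e.orthonormal
  constructor
  · intro h
    have hmemall : ∀ x : H, ∃ m : ℕ, 0 < m ∧ (T ^ m) x = x := fun x => by
      have : x ∈ ({x : H | ∃ m : ℕ, 0 < m ∧ (T ^ m) x = x}) := h ▸ Set.mem_univ x
      exact this
    have hroot : ∀ n, ∃ k : ℕ, 0 < k ∧ α n ^ k = 1 := by
      intro n
      obtain ⟨m, hm, hx⟩ := hmemall (e n)
      rw [hpow] at hx
      refine ⟨m, hm, ?_⟩
      by_contra hne
      have h0 : (α n ^ m - 1) • (e n : H) = 0 := by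
        rw [sub_smul, hx, one_smul, sub_self]
      exact hne (sub_eq_zero.mp ((smul_eq_zero.mp h0).resolve_right (hen n)))
    refine ⟨hroot, ?_⟩
    have hmem : Memℓp (fun n : ℕ => ((1 : ℂ)/2) ^ n) 2 := by
      apply memℓp_gen
      have : Summable (fun n : ℕ => ((1:ℝ)/2) ^ n) :=
        summable_geometric_of_lt_one (by norm_num) (by norm_num)
      apply this.of_nonneg_of_le (fun n => by positivity)
      intro n
      have hE : ENNReal.toReal 2 = ((2:ℕ):ℝ) := by norm_num
      rw [hE, Real.rpow_natCast]
      have hnorm : ‖((1:ℂ)/2) ^ n‖ = ((1:ℝ)/2) ^ n := by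
        rw [norm_pow]; norm_num
      rw [hnorm]
      calc (((1:ℝ)/2) ^ n) ^ (2:ℕ) ≤ (((1:ℝ)/2) ^ n) ^ (1:ℕ) := by
            apply pow_le_pow_of_le_one (by positivity) _ (by norm_num)
            apply pow_le_one₀ <;> norm_num
        _ = ((1:ℝ)/2) ^ n := pow_one _
    set c : lp (fun _ : ℕ => ℂ) 2 := ⟨fun n : ℕ => ((1 : ℂ)/2) ^ n, hmem⟩ with hc
    set x : H := e.repr.symm c with hxdef
    have hcoef : ∀ n, ⟪(e n : H), x⟫_ℂ = ((1 : ℂ)/2) ^ n := by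
      intro n
      rw [← e.repr_apply_apply, hxdef, LinearIsometryEquiv.apply_symm_apply]
    obtain ⟨m, hm, hx⟩ := hmemall x
    refine ⟨m, fun n => ?_⟩
    have hfg : (innerSL ℂ (e n : H)).comp (T ^ m) = (α n ^ m) • innerSL ℂ (e n : H) := by
      apply ContinuousLinearMap.ext_on hdense
      rintro _ ⟨i, rfl⟩
      simp only [ContinuousLinearMap.comp_apply, ContinuousLinearMap.smul_apply,
        innerSL_apply_apply, hpow, inner_smul_right, hinner]
      by_cases hni : n = i <;> simp [hni]
    have key : α n ^ m = 1 := by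
      have h1 := congrArg (fun f : H →L[ℂ] ℂ => f x) hfg
      simp only [ContinuousLinearMap.comp_apply, ContinuousLinearMap.smul_apply,
        innerSL_apply_apply, hx, smul_eq_mul] at h1
      rw [hcoef] at h1
      have hne : ((1 : ℂ)/2) ^ n ≠ 0 := pow_ne_zero _ (by norm_num)
      exact (mul_left_eq_self₀.mp h1.symm).resolve_right hne
    exact Nat.le_of_dvd hm (orderOf_dvd_of_pow_eq_one key)
  · rintro ⟨h1, B, hB⟩
    have hord : ∀ n, 0 < orderOf (α n) := by
      intro n
      obtain ⟨k, hk, hk1⟩ := h1 n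
      exact (isOfFinOrder_iff_pow_eq_one.mpr ⟨k, hk, hk1⟩).orderOf_pos
    have hpow1 : ∀ n, α n ^ (Nat.factorial B) = 1 := fun n =>
      orderOf_dvd_iff_pow_eq_one.mp (Nat.dvd_factorial (hord n) (hB n))
    have hT1 : (T ^ (Nat.factorial B)) = 1 := by
      apply ContinuousLinearMap.ext_on hdense
      rintro _ ⟨i, rfl⟩
      simp [hpow, hpow1]
    apply Set.eq_univ_of_forall
    intro x
    exact ⟨Nat.factorial B, Nat.factorial_pos B, by rw [hT1]; rfl⟩
end

section
/- Let T be a diagonal operator on H with T e_n = α_n e_n for all n. If every α_n is a root of unity and sup{order(α_n) : n ∈ ℕ} = ∞, then P(T) is a proper dense subspace of H (i.e. P(T) ≠ H and the closure of P(T) equals H). -/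
local notation "⟪" x ", " y "⟫" => @inner ℂ _ _ x y

private lemma fix_pow_aux {H : Type*} [NormedAddCommGroup H] [InnerProductSpace ℂ H]
    (S : H →L[ℂ] H) (x : H) (h : S x = x) : ∀ k : ℕ, (S ^ k) x = x := by
  intro k
  induction k with
  | zero => simp
  | succ k ih => rw [pow_succ', ContinuousLinearMap.mul_apply, ih, h]

/-- For a diagonal operator `T e_n = α_n • e_n` where every `α_n` is a root of unity but
the orders of the `α_n` are unbounded, the set of periodic points of `T` is a proper
dense subspace of `H`. -/
theorem diagonal_periodic_points_proper_dense
    {H : Type*} [NormedAddCommGroup H] [InnerProductSpace ℂ H] [CompleteSpace H]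
    (e : HilbertBasis ℕ ℂ H) (α : ℕ → ℂ) (T : H →L[ℂ] H)
    (hT : ∀ n, T (e n) = α n • e n)
    (hG : ∀ n, ∃ k : ℕ, 0 < k ∧ α n ^ k = 1)
    (hub : ∀ B : ℕ, ∃ n, B < orderOf (α n)) :
    {x : H | ∃ m : ℕ, 0 < m ∧ (T ^ m) x = x} ≠ Set.univ ∧
    Dense {x : H | ∃ m : ℕ, 0 < m ∧ (T ^ m) x = x} := by
  have hfin : ∀ n, IsOfFinOrder (α n) := fun n =>
    isOfFinOrder_iff_pow_eq_one.mpr (hG n)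
  have hTpow : ∀ (m n : ℕ), (T ^ m) (e n) = α n ^ m • e n := by
    intro m n
    induction m with
    | zero => simp
    | succ m ih =>
      rw [pow_succ', ContinuousLinearMap.mul_apply, ih, map_smul, hT n, smul_smul,
        ← pow_succ]
  have hdense : Dense (Submodule.span ℂ (Set.range (e : ℕ → H)) : Set H) :=
    Submodule.dense_iff_topologicalClosure_eq_top.mpr e.dense_span
  have hinner : ∀ (n : ℕ) (x : H), ⟪e n, T x⟫ = α n * ⟪e n, x⟫ := by
    intro n
    have h : (innerSL ℂ (e n)).comp T = α n • innerSL ℂ (e n) := by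
      apply ContinuousLinearMap.ext_on hdense
      rintro _ ⟨m, rfl⟩
      simp only [ContinuousLinearMap.comp_apply, ContinuousLinearMap.smul_apply,
        innerSL_apply_apply, hT m, inner_smul_right, smul_eq_mul]
      by_cases hnm : n = m
      · subst hnm; ring
      · have hz : ⟪e n, e m⟫ = 0 := by
          have := orthonormal_iff_ite.mp e.orthonormal n m
          simpa [hnm] using this
        rw [hz]; ring
    intro x
    have := DFunLike.congr_fun h x
    simpa [smul_eq_mul] using this
  have hinnerpow : ∀ (m n : ℕ) (x : H), ⟪e n, (T ^ m) x⟫ = α n ^ m * ⟪e n, x⟫ := by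
    intro m n x
    induction m generalizing x with
    | zero => simp
    | succ m ih =>
      rw [pow_succ', ContinuousLinearMap.mul_apply, hinner, ih]
      ring
  constructor
  · -- properness: construct a non-periodic point
    intro hP
    set c : ℕ → ℂ := fun n => (2 : ℂ)⁻¹ ^ n with hc_def
    have hc : Memℓp c 2 := by
      apply memℓp_gen
      have heq : (fun n : ℕ => ‖c n‖ ^ (2 : ENNReal).toReal) = fun n : ℕ => ((4 : ℝ)⁻¹) ^ n := by
        funext n
        have h1 : ‖c n‖ = (2 : ℝ)⁻¹ ^ n := by simp [hc_def]
        have h2 : (2 : ENNReal).toReal = (2 : ℝ) := by simp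
        rw [h1, h2, Real.rpow_two, ← pow_mul, mul_comm, pow_mul]
        norm_num
      rw [heq]
      exact summable_geometric_of_lt_one (by norm_num) (by norm_num)
    set x : H := e.repr.symm ⟨c, hc⟩ with hx_def
    have hcoef : ∀ n, ⟪e n, x⟫ = c n := by
      intro n
      rw [← e.repr_apply_apply]
      simp [hx_def]
    have hx : x ∈ {x : H | ∃ m : ℕ, 0 < m ∧ (T ^ m) x = x} := hP ▸ Set.mem_univ x
    obtain ⟨m, hm, hTm⟩ := hx
    obtain ⟨n, hn⟩ := hub m
    have h1 : α n ^ m * ⟪e n, x⟫ = ⟪e n, x⟫ := by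
      rw [← hinnerpow, hTm]
    rw [hcoef] at h1
    have hcne : c n ≠ 0 := pow_ne_zero _ (by norm_num)
    have h2 : α n ^ m = 1 := mul_right_cancel₀ hcne (by rw [h1, one_mul])
    have := Nat.le_of_dvd hm (orderOf_dvd_of_pow_eq_one h2)
    omega
  · -- density
    apply hdense.mono
    intro x hx
    induction hx using Submodule.span_induction with
    | mem y hy =>
      obtain ⟨n, rfl⟩ := hy
      refine ⟨orderOf (α n), (hfin n).orderOf_pos, ?_⟩
      rw [hTpow, pow_orderOf_eq_one, one_smul]
    | zero => exact ⟨1, one_pos, by simp⟩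
    | add y z _ _ hy hz =>
      obtain ⟨m1, hm1, h1⟩ := hy
      obtain ⟨m2, hm2, h2⟩ := hz
      refine ⟨m1 * m2, Nat.mul_pos hm1 hm2, ?_⟩
      have hy' : (T ^ (m1 * m2)) y = y := by
        rw [pow_mul]; exact fix_pow_aux _ _ h1 m2
      have hz' : (T ^ (m1 * m2)) z = z := by
        rw [mul_comm, pow_mul]; exact fix_pow_aux _ _ h2 m1
      rw [map_add, hy', hz']
    | smul a y _ hy =>
      obtain ⟨m, hm, h⟩ := hy
      exact ⟨m, hm, by rw [map_smul, h]⟩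
end

section
/- Let σ: ℕ → ℕ be a bijection and let T = T_σ be the associated permutation operator on H. Then P(T) = P(T*), and every vector x = Σ_{n=1}^∞ c_n e_n ∈ H for which there exists a positive integer k with card([n]) ≤ k whenever c_n ≠ 0 belongs to P(T); that is, ⋃_{k∈ℕ} {Σ c_n e_n ∈ H : card([n]) ≤ k whenever c_n ≠ 0} ⊆ P(T). -/
/-!
An operator permuting an orthonormal basis is unitary, and for a unitary `U` the identities
`U ^ m x = x` and `(U⋆) ^ m x = x` are equivalent, since `(U⋆) ^ m` is the inverse of `U ^ m`.
If every index in the support of `x` lies on a `σ`-orbit with at most `k` elements, then its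
minimal period under `σ` divides `k !`, so `T ^ k !` fixes the corresponding basis vectors and
therefore `x`.
-/

/-- The orbit `[n] = {σ^k n : k ∈ ℤ}` of `n` under the bijection `σ : ℕ → ℕ`. -/
def permOrbit (σ : Equiv.Perm ℕ) (n : ℕ) : Set ℕ := {m : ℕ | ∃ z : ℤ, (σ ^ z) n = m}

open Function MulAction

theorem permOrbit_eq_orbit_zpowers (σ : Equiv.Perm ℕ) (n : ℕ) :
    permOrbit σ n = orbit (Subgroup.zpowers σ) n := by
  ext m
  simp [permOrbit, mem_orbit_iff, Subgroup.smul_def, Equiv.Perm.smul_def]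

theorem minimalPeriod_eq_ncard_permOrbit {σ : Equiv.Perm ℕ} {n : ℕ}
    (hfin : (permOrbit σ n).Finite) : minimalPeriod σ n = (permOrbit σ n).ncard := by
  rw [permOrbit_eq_orbit_zpowers] at hfin ⊢
  have := hfin.fintype
  rw [← Nat.card_coe_set_eq, Nat.card_eq_fintype_card, ← minimalPeriod_eq_card]
  rfl

theorem pow_factorial_apply_eq_self_of_ncard_permOrbit_le {σ : Equiv.Perm ℕ} {n k : ℕ}
    (hfin : (permOrbit σ n).Finite) (hk : (permOrbit σ n).ncard ≤ k) :
    (σ ^ k.factorial) n = n := by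
  have hpos : 0 < (permOrbit σ n).ncard := (Set.ncard_pos hfin).2 ⟨n, 0, rfl⟩
  rw [← minimalPeriod_eq_ncard_permOrbit hfin] at hpos hk
  have : IsPeriodicPt σ k.factorial n :=
    isPeriodicPt_iff_minimalPeriod_dvd.2 (Nat.dvd_factorial hpos hk)
  rwa [← Equiv.Perm.iterate_eq_pow]

section HilbertBasis

variable {ι 𝕜 E : Type*} [RCLike 𝕜] [NormedAddCommGroup E] [InnerProductSpace 𝕜 E]

theorem HilbertBasis.continuousLinearMap_ext {F : Type*} [NormedAddCommGroup F]
    [NormedSpace 𝕜 F] (b : HilbertBasis ι 𝕜 E) {S T : E →L[𝕜] F}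
    (h : ∀ i, S (b i) = T (b i)) : S = T :=
  ContinuousLinearMap.ext_on (Submodule.dense_iff_topologicalClosure_eq_top.2 b.dense_span)
    (by rintro _ ⟨i, rfl⟩; exact h i)

theorem HilbertBasis.apply_eq_self_of_forall_repr_ne_zero (b : HilbertBasis ι 𝕜 E)
    (S : E →L[𝕜] E) {x : E} (h : ∀ i, b.repr x i ≠ 0 → S (b i) = b i) : S x = x := by
  refine ((b.hasSum_repr x).mapL S).unique ?_
  convert b.hasSum_repr x using 2 with i
  by_cases hi : b.repr x i = 0
  · simp [hi]
  · simp [h i hi]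

variable [CompleteSpace E]

theorem HilbertBasis.adjoint_apply_of_apply_eq (b : HilbertBasis ι 𝕜 E) {σ : Equiv.Perm ι}
    {T : E →L[𝕜] E} (hT : ∀ i, T (b i) = b (σ i)) (i : ι) :
    T.adjoint (b i) = b (σ.symm i) := by
  classical
  apply b.repr.injective
  ext j
  rw [b.repr_apply_apply, b.repr_apply_apply, ContinuousLinearMap.adjoint_inner_right, hT,
    orthonormal_iff_ite.mp b.orthonormal, orthonormal_iff_ite.mp b.orthonormal]
  simp [eq_comm, Equiv.eq_symm_apply]

theorem HilbertBasis.mem_unitary_of_apply_eq (b : HilbertBasis ι 𝕜 E) {σ : Equiv.Perm ι}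
    {T : E →L[𝕜] E} (hT : ∀ i, T (b i) = b (σ i)) : T ∈ unitary (E →L[𝕜] E) := by
  have hT' := b.adjoint_apply_of_apply_eq hT
  constructor <;> refine b.continuousLinearMap_ext fun i ↦ ?_
  · simp [ContinuousLinearMap.star_eq_adjoint, hT, hT']
  · simp [ContinuousLinearMap.star_eq_adjoint, hT, hT']

theorem ContinuousLinearMap.star_apply_eq_self_iff_of_mem_unitary {V : E →L[𝕜] E}
    (hV : V ∈ unitary (E →L[𝕜] E)) (x : E) : star V x = x ↔ V x = x := by
  constructor <;> intro h
  · calc V x = V (star V x) := by rw [h]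
      _ = x := by rw [← mul_apply_eq_comp, Unitary.mul_star_self_of_mem hV, one_apply_eq_self]
  · calc star V x = star V (V x) := by rw [h]
      _ = x := by rw [← mul_apply_eq_comp, Unitary.star_mul_self_of_mem hV, one_apply_eq_self]

end HilbertBasis

/-- For a permutation operator `T e_n = e_{σ n}`, the periodic points of `T` coincide with
those of `T*`, and every vector whose nonzero coordinates are supported on orbits of
uniformly bounded (finite) cardinality is periodic. -/
theorem permutation_periodic_points_superset
    {H : Type*} [NormedAddCommGroup H] [InnerProductSpace ℂ H] [CompleteSpace H]
    (e : HilbertBasis ℕ ℂ H) (σ : Equiv.Perm ℕ) (T : H →L[ℂ] H)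
    (hT : ∀ n, T (e n) = e (σ n)) :
    ({x : H | ∃ m : ℕ, 0 < m ∧ (T ^ m) x = x}
        = {x : H | ∃ m : ℕ, 0 < m ∧ ((ContinuousLinearMap.adjoint T) ^ m) x = x}) ∧
    {x : H | ∃ k : ℕ, 0 < k ∧ ∀ n, e.repr x n ≠ 0 →
        (permOrbit σ n).Finite ∧ (permOrbit σ n).ncard ≤ k}
      ⊆ {x : H | ∃ m : ℕ, 0 < m ∧ (T ^ m) x = x} := by
  have hU := e.mem_unitary_of_apply_eq hT
  have hpow (j n : ℕ) : (T ^ j) (e n) = e ((σ ^ j) n) := by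
    rw [pow_apply_eq_iterate, Equiv.Perm.coe_pow]
    exact (Semiconj.iterate_right (fun n ↦ (hT n).symm) j n).symm
  constructor
  · ext x
    simp_rw [← ContinuousLinearMap.star_eq_adjoint, ← star_pow,
      ContinuousLinearMap.star_apply_eq_self_iff_of_mem_unitary (pow_mem hU _)]
  · rintro x ⟨k, -, hx⟩
    refine ⟨k.factorial, k.factorial_pos, e.apply_eq_self_of_forall_repr_ne_zero _ fun n hn ↦ ?_⟩
    rw [hpow, pow_factorial_apply_eq_self_of_ncard_permOrbit_le (hx n hn).1 (hx n hn).2]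
end

section
/- There exist a bijection σ: ℕ → ℕ and a vector x ∈ P(T_σ) such that x does not lie in ⋃_{k∈ℕ} {Σ c_n e_n ∈ H : card([n]) ≤ k whenever c_n ≠ 0}; i.e., for every positive integer k there is some n with ⟨x, e_n⟩ ≠ 0 and card([n]) > k. Hence the inclusion ⋃_{k∈ℕ} {Σ c_n e_n ∈ H : card([n]) ≤ k whenever c_n ≠ 0} ⊆ P(T_σ) can be proper. -/
/-!
Split `ℕ` into consecutive blocks of sizes `1, 2, 3, …` and let `σ` rotate each block
cyclically. Every orbit of `σ` is finite, but orbits are arbitrarily large. A vector whose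
coefficients are constant on each block is fixed by `T_σ`; taking the value `2⁻ʲ` on the block
of size `j + 1` makes it square-summable (since `∑ (j + 1) 4⁻ʲ < ∞`) while every coefficient is
nonzero, so it meets orbits of every size.
-/

open scoped lp

namespace HilbertBasis

variable {ι 𝕜 E : Type*} [RCLike 𝕜] [NormedAddCommGroup E] [InnerProductSpace 𝕜 E]
  [CompleteSpace E] (b : HilbertBasis ι 𝕜 E) (σ : Equiv.Perm ι)

noncomputable def permute : HilbertBasis ι 𝕜 E :=
  HilbertBasis.mk (b.orthonormal.comp σ σ.injective)
    (by rw [σ.surjective.range_comp]; exact b.dense_span.ge)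

@[simp]
theorem permute_apply (i : ι) : b.permute σ i = b (σ i) := by
  simp [permute, HilbertBasis.coe_mk]

theorem permute_repr_apply (v : E) (i : ι) : (b.permute σ).repr v i = b.repr v (σ i) := by
  rw [HilbertBasis.repr_apply_apply, HilbertBasis.repr_apply_apply, permute_apply]

noncomputable def permOperator : E ≃ₗᵢ[𝕜] E :=
  b.repr.trans (b.permute σ).repr.symm

theorem permOperator_apply_basis (i : ι) : b.permOperator σ (b i) = b (σ i) := by
  classical
  simp [permOperator, b.repr_self, HilbertBasis.repr_symm_single]

theorem permOperator_apply_eq_self_iff {v : E} :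
    b.permOperator σ v = v ↔ ∀ i, b.repr v (σ i) = b.repr v i := by
  rw [permOperator, LinearIsometryEquiv.trans_apply, LinearIsometryEquiv.symm_apply_eq, eq_comm,
    lp.ext_iff, funext_iff]
  simp only [permute_repr_apply]

end HilbertBasis

namespace Equiv.Perm

theorem sameCycle_permCongr {α β : Type*} (g : α ≃ β) (p : Perm α) (x y : α) :
    (g.permCongr p).SameCycle (g x) (g y) ↔ p.SameCycle x y := by
  have hpow (z : ℤ) : g.permCongr p ^ z = g.permCongr (p ^ z) :=
    (map_zpow g.permCongrHom p z).symm
  simp only [SameCycle, hpow, permCongr_apply, symm_apply_apply, g.injective.eq_iff]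

section Sigma

variable {α : Type*} {β : α → Type*} {F : ∀ a, Perm (β a)}

theorem sigmaCongrRight_zpow (F : ∀ a, Perm (β a)) (z : ℤ) :
    sigmaCongrRight F ^ z = sigmaCongrRight (F ^ z) :=
  (map_zpow (sigmaCongrRightHom β) F z).symm

theorem SameCycle.fst_eq_of_sigmaCongrRight {x y : Σ a, β a}
    (h : (sigmaCongrRight F).SameCycle x y) : x.1 = y.1 := by
  obtain ⟨z, rfl⟩ := h
  rw [sigmaCongrRight_zpow]
  rfl

theorem SameCycle.sigma_mk {a : α} {x y : β a} (h : (F a).SameCycle x y) :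
    (sigmaCongrRight F).SameCycle ⟨a, x⟩ ⟨a, y⟩ := by
  obtain ⟨z, rfl⟩ := h
  exact ⟨z, by rw [sigmaCongrRight_zpow]; rfl⟩

end Sigma

end Equiv.Perm

theorem sameCycle_finRotate {n : ℕ} (i j : Fin n) : (finRotate n).SameCycle i j := by
  rcases lt_or_ge n 2 with hn | hn
  · have : Subsingleton (Fin n) := Fin.subsingleton_iff_le_one.2 (by omega)
    exact (Subsingleton.elim i j).sameCycle _
  · have hmoved (k : Fin n) : finRotate n k ≠ k :=
      Equiv.Perm.mem_support.1 (by simp [support_finRotate_of_le hn])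
    exact (isCycle_finRotate_of_le hn).sameCycle (hmoved i) (hmoved j)

theorem summable_pow_fst_sigma_fin {r : ℝ} (h0 : 0 ≤ r) (h1 : r < 1) :
    Summable fun a : Σ j : ℕ, Fin (j + 1) => r ^ a.1 := by
  refine (summable_sigma_of_nonneg fun _ => by positivity).2 ⟨fun _ => .of_finite, ?_⟩
  have hr : ‖r‖ < 1 := by rwa [Real.norm_of_nonneg h0]
  have hsum (j : ℕ) : ∑' _ : Fin (j + 1), r ^ j = (j : ℝ) ^ 1 * r ^ j + r ^ j := by
    simp only [tsum_fintype, Finset.sum_const, Finset.card_univ, Fintype.card_fin, nsmul_eq_mul]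
    push_cast
    ring
  simpa only [hsum] using
    (summable_pow_mul_geometric_of_norm_lt_one 1 hr).add (summable_geometric_of_lt_one h0 h1)

theorem permOrbit_permCongr {α : Type*} (g : α ≃ ℕ) (p : Equiv.Perm α) (a : α) :
    permOrbit (g.permCongr p) (g a) = g '' {b | p.SameCycle a b} := by
  ext m
  obtain ⟨b, rfl⟩ := g.surjective m
  rw [g.injective.mem_set_image]
  exact Equiv.Perm.sameCycle_permCongr g p a b

abbrev Blocks : Type := Σ j : ℕ, Fin (j + 1)

def blockRotation : Equiv.Perm Blocks :=
  Equiv.Perm.sigmaCongrRight fun j => finRotate (j + 1)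

theorem sameCycle_blockRotation_iff {a b : Blocks} :
    blockRotation.SameCycle a b ↔ a.1 = b.1 := by
  refine ⟨fun h => h.fst_eq_of_sigmaCongrRight (F := fun j => finRotate (j + 1)), ?_⟩
  obtain ⟨j, i⟩ := a
  obtain ⟨j', i'⟩ := b
  rintro rfl
  exact (sameCycle_finRotate i i').sigma_mk (F := fun j => finRotate (j + 1))

section BlockPermutation

variable (g : Blocks ≃ ℕ)

theorem permOrbit_blockRotation (a : Blocks) :
    permOrbit (g.permCongr blockRotation) (g a) = g '' Set.range (Sigma.mk a.1) := by
  rw [permOrbit_permCongr]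
  congr 1
  ext ⟨j, i⟩
  simp [sameCycle_blockRotation_iff, eq_comm]

theorem finite_permOrbit_blockRotation (a : Blocks) :
    (permOrbit (g.permCongr blockRotation) (g a)).Finite := by
  rw [permOrbit_blockRotation]
  exact (Set.finite_range _).image g

theorem ncard_permOrbit_blockRotation (a : Blocks) :
    (permOrbit (g.permCongr blockRotation) (g a)).ncard = a.1 + 1 := by
  rw [permOrbit_blockRotation, Set.ncard_image_of_injective _ g.injective,
    Set.ncard_range_of_injective sigma_mk_injective, Nat.card_eq_fintype_card, Fintype.card_fin]

noncomputable def blockVector : ℓ²(ℕ, ℂ) :=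
  ⟨fun n => (2⁻¹ : ℂ) ^ (g.symm n).1, by
    refine memℓp_gen (g.summable_iff.1 ?_)
    have := summable_pow_fst_sigma_fin (r := 2⁻¹ ^ 2) (by norm_num) (by norm_num)
    simpa [Function.comp_def, ← pow_mul, mul_comm] using this⟩

theorem blockVector_apply (a : Blocks) : blockVector g (g a) = (2⁻¹ : ℂ) ^ a.1 := by
  simp [blockVector]

theorem blockVector_permCongr_blockRotation (n : ℕ) :
    blockVector g (g.permCongr blockRotation n) = blockVector g n := by
  simp [blockVector, Equiv.permCongr_apply, blockRotation]

end BlockPermutation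

/-- There exist a bijection `σ : ℕ → ℕ`, an associated permutation operator `T`, and a
periodic point `x` of `T` such that for every positive integer `k` there is some `n` with
`⟨x, e_n⟩ ≠ 0` and `card [n] > k`; hence the inclusion of Theorem 4.1 can be proper. -/
theorem permutation_periodic_points_inclusion_can_be_proper
    {H : Type*} [NormedAddCommGroup H] [InnerProductSpace ℂ H] [CompleteSpace H]
    (e : HilbertBasis ℕ ℂ H) :
    ∃ (σ : Equiv.Perm ℕ) (T : H →L[ℂ] H) (x : H),
      (∀ n, T (e n) = e (σ n)) ∧
      (∃ m : ℕ, 0 < m ∧ (T ^ m) x = x) ∧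
      ∀ k : ℕ, 0 < k → ∃ n, e.repr x n ≠ 0 ∧
        (permOrbit σ n).Finite ∧ k < (permOrbit σ n).ncard := by
  let g : Blocks ≃ ℕ := (Denumerable.ofEncodableOfInfinite Blocks).eqv
  let σ := g.permCongr blockRotation
  let x := e.repr.symm (blockVector g)
  have hx : e.repr x = blockVector g := e.repr.apply_symm_apply _
  refine ⟨σ, (e.permOperator σ).toContinuousLinearEquiv, x, e.permOperator_apply_basis σ,
    ⟨1, one_pos, ?_⟩, fun k _ => ⟨g ⟨k, 0⟩, ?_, finite_permOrbit_blockRotation g _, ?_⟩⟩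
  · rw [pow_one]
    exact (e.permOperator_apply_eq_self_iff σ).2 fun n => by
      rw [hx, blockVector_permCongr_blockRotation]
  · rw [hx, blockVector_apply]
    exact pow_ne_zero _ (by norm_num)
  · rw [ncard_permOrbit_blockRotation]
    exact k.lt_succ_self
end

section
/- Let σ: ℕ → ℕ be a bijection and let T = T_σ be the associated permutation operator on H. If the closure of P(T) has finite codimension in H (i.e. the orthogonal complement of the closure of P(T) is finite-dimensional), then P(T) is dense in H; in particular the closure of P(T) equals H. -/
/-!
The periodic points of `T` form a submodule `P`. If `x ∈ P` has period `m`, then its coefficients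
are invariant under `σ^m`; along an infinite `σ`-orbit this forces them to vanish, since they are
square-summable. So if some `n` has an infinite orbit, the orthonormal vectors `e (σ^j n)` all lie
in `Pᗮ`, which is then infinite-dimensional. Otherwise every `e n` is periodic and `P` is dense.
-/

open Function Filter Set Submodule Topology

namespace Function

variable {α : Type*} {f : α → α} {x : α}

theorem Injective.iterate_apply_injective (hf : Injective f) (hx : x ∉ periodicPts f) :
    Injective (f^[·] x) := by
  intro a b hab
  by_contra hne
  rcases Nat.lt_or_gt_of_ne hne with hlt | hlt
  · exact hx (mk_mem_periodicPts (Nat.sub_pos_of_lt hlt) (iterate_cancel hf hab.symm))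
  · exact hx (mk_mem_periodicPts (Nat.sub_pos_of_lt hlt) (iterate_cancel hf hab))

theorem Injective.iterate_apply_notMem_periodicPts (hf : Injective f) (hx : x ∉ periodicPts f)
    (j : ℕ) : f^[j] x ∉ periodicPts f := by
  rintro ⟨p, hp, hper⟩
  have hcancel : f^[p + j] x = f^[j] x := by rw [iterate_add_apply, hper]
  exact hx (mk_mem_periodicPts hp (show f^[p] x = x by simpa using iterate_cancel hf hcancel))

end Function

theorem eq_of_tendsto_cofinite_of_comp_injective_eq {ι κ α : Type*} [Infinite κ]
    [TopologicalSpace α] [T2Space α] {f : ι → α} {a c : α} (hf : Tendsto f cofinite (𝓝 a))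
    {g : κ → ι} (hg : Injective g) (hc : ∀ k, f (g k) = c) : c = a := by
  have hfg : Tendsto (fun _ : κ => c) cofinite (𝓝 a) := by
    simpa only [Function.comp_def, hc] using hf.comp hg.tendsto_cofinite
  exact tendsto_const_nhds_iff.mp hfg

namespace Module.End

variable {R M : Type*} [Semiring R] [AddCommMonoid M] [Module R M]

def periodicPtsSubmodule (f : Module.End R M) : Submodule R M where
  carrier := periodicPts f
  zero_mem' := mk_mem_periodicPts one_pos (map_zero f)
  add_mem' := by
    rintro x y ⟨m, hm, hx⟩ ⟨n, hn, hy⟩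
    refine mk_mem_periodicPts (Nat.mul_pos hm hn) ?_
    rw [IsPeriodicPt, IsFixedPt, ← coe_pow, map_add, coe_pow, (hx.mul_const n).eq,
      (hy.const_mul m).eq]
  smul_mem' := by
    rintro c x ⟨m, hm, hx⟩
    refine mk_mem_periodicPts hm ?_
    simp only [IsPeriodicPt, IsFixedPt, ← coe_pow, map_smul] at hx ⊢
    rw [hx]

end Module.End

namespace HilbertBasis

variable {ι 𝕜 E : Type*} [RCLike 𝕜] [NormedAddCommGroup E] [InnerProductSpace 𝕜 E]
  (e : HilbertBasis ι 𝕜 E) {σ : ι → ι} {T : E →L[𝕜] E}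

theorem repr_map_apply (hσ : Injective σ) (hT : ∀ i, T (e i) = e (σ i)) (x : E) (i : ι) :
    e.repr (T x) (σ i) = e.repr x i := by
  classical
  have hdense : Dense (span 𝕜 (range e) : Set E) :=
    dense_iff_topologicalClosure_eq_top.mpr e.dense_span
  have hfun : (innerSL 𝕜 (e (σ i))).comp T = innerSL 𝕜 (e i) := by
    refine ContinuousLinearMap.ext_on hdense ?_
    rintro _ ⟨j, rfl⟩
    simp [hT, orthonormal_iff_ite.mp e.orthonormal, hσ.eq_iff]
  simpa [e.repr_apply_apply] using congr($hfun x)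

theorem repr_comp_iterate_of_isPeriodicPt (hσ : Injective σ) (hT : ∀ i, T (e i) = e (σ i))
    {m : ℕ} {x : E} (hx : IsPeriodicPt T m x) : e.repr x ∘ σ^[m] = e.repr x := by
  have hTm : ∀ i, (T ^ m) (e i) = e (σ^[m] i) := by
    have hsemiconj : Semiconj e σ T := fun i => (hT i).symm
    intro i
    rw [FunLike.coe_pow_eq_iterate]
    exact (hsemiconj.iterate_right m i).symm
  funext i
  have h := e.repr_map_apply (hσ.iterate m) hTm x i
  rwa [FunLike.coe_pow_eq_iterate, hx.eq] at h

theorem repr_eq_zero_of_mem_periodicPts (hσ : Injective σ) (hT : ∀ i, T (e i) = e (σ i))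
    {x : E} (hx : x ∈ periodicPts T) {y : ι} (hy : y ∉ periodicPts σ) : e.repr x y = 0 := by
  obtain ⟨m, hm, hxm⟩ := hx
  have hinv : ∀ k, e.repr x (σ^[m * k] y) = e.repr x y := fun k => by
    rw [iterate_mul]
    exact congrFun (iterate_invariant (e.repr_comp_iterate_of_isPeriodicPt hσ hT hxm) k) y
  have hinj : Injective fun k => σ^[m * k] y :=
    (hσ.iterate_apply_injective hy).comp (mul_right_injective₀ hm.ne')
  have hsum : Summable fun i => ‖e.repr x i‖ ^ 2 := by
    simpa [e.repr_apply_apply] using e.orthonormal.inner_products_summable (x := x)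
  have h := eq_of_tendsto_cofinite_of_comp_injective_eq hsum.tendsto_cofinite_zero hinj
    (c := ‖e.repr x y‖ ^ 2) (fun k => by simp only [hinv])
  simpa using h

theorem apply_mem_orthogonal_periodicPtsSubmodule (hσ : Injective σ)
    (hT : ∀ i, T (e i) = e (σ i)) {y : ι} (hy : y ∉ periodicPts σ) :
    e y ∈ (Module.End.periodicPtsSubmodule (T : Module.End 𝕜 E))ᗮ := by
  rw [mem_orthogonal']
  intro u hu
  rw [← e.repr_apply_apply]
  exact e.repr_eq_zero_of_mem_periodicPts hσ hT hu hy

theorem dense_periodicPtsSubmodule (hT : ∀ i, T (e i) = e (σ i))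
    (hσ : periodicPts σ = univ) :
    Dense (Module.End.periodicPtsSubmodule (T : Module.End 𝕜 E) : Set E) := by
  have hsemiconj : Semiconj e σ T := fun i => (hT i).symm
  refine (dense_iff_topologicalClosure_eq_top.mpr e.dense_span).mono (span_le.mpr ?_)
  rintro _ ⟨i, rfl⟩
  exact hsemiconj.mapsTo_periodicPts (hσ ▸ mem_univ i)

theorem periodicPts_eq_univ_of_finiteDimensional_orthogonal (hσ : Injective σ)
    (hT : ∀ i, T (e i) = e (σ i))
    [FiniteDimensional 𝕜 (Module.End.periodicPtsSubmodule (T : Module.End 𝕜 E))ᗮ] :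
    periodicPts σ = univ := by
  rw [eq_univ_iff_forall]
  by_contra! ⟨n, hn⟩
  let v : ℕ → (Module.End.periodicPtsSubmodule (T : Module.End 𝕜 E))ᗮ := fun j =>
    ⟨e (σ^[j] n), e.apply_mem_orthogonal_periodicPtsSubmodule hσ hT
      (hσ.iterate_apply_notMem_periodicPts hn j)⟩
  have hv : LinearIndependent 𝕜 v := .of_comp (Submodule.subtype _)
    (e.orthonormal.comp _ (hσ.iterate_apply_injective hn)).linearIndependent
  exact Module.Finite.not_linearIndependent_of_infinite v hv

end HilbertBasis

theorem permutation_periodic_points_dense_of_finite_codimension_general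
    {H : Type*} [NormedAddCommGroup H] [InnerProductSpace ℂ H]
    (e : HilbertBasis ℕ ℂ H) (σ : Equiv.Perm ℕ) (T : H →L[ℂ] H)
    (hT : ∀ n, T (e n) = e (σ n))
    (hcodim : FiniteDimensional ℂ
      ((Submodule.span ℂ {x : H | ∃ m : ℕ, 0 < m ∧ (T ^ m) x = x})ᗮ)) :
    Dense {x : H | ∃ m : ℕ, 0 < m ∧ (T ^ m) x = x} := by
  have hP : {x : H | ∃ m : ℕ, 0 < m ∧ (T ^ m) x = x} =
      (Module.End.periodicPtsSubmodule (T : Module.End ℂ H) : Set H) := by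
    ext x
    simp [Module.End.periodicPtsSubmodule, periodicPts, IsPeriodicPt, IsFixedPt]
  rw [hP, span_eq] at hcodim
  rw [hP]
  exact e.dense_periodicPtsSubmodule hT
    (e.periodicPts_eq_univ_of_finiteDimensional_orthogonal σ.injective hT)

/-- For a permutation operator `T e_n = e_{σ n}`, if the closure of the set of periodic
points has finite codimension in `H` (i.e. its orthogonal complement is
finite-dimensional), then the periodic points are dense in `H`. -/
theorem permutation_periodic_points_dense_of_finite_codimension
    {H : Type*} [NormedAddCommGroup H] [InnerProductSpace ℂ H] [CompleteSpace H]
    (e : HilbertBasis ℕ ℂ H) (σ : Equiv.Perm ℕ) (T : H →L[ℂ] H)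
    (hT : ∀ n, T (e n) = e (σ n))
    (hcodim : FiniteDimensional ℂ
      ((Submodule.span ℂ {x : H | ∃ m : ℕ, 0 < m ∧ (T ^ m) x = x})ᗮ)) :
    Dense {x : H | ∃ m : ℕ, 0 < m ∧ (T ^ m) x = x} :=
  permutation_periodic_points_dense_of_finite_codimension_general e σ T hT hcodim
end

section
/- Let T be a bounded operator on H. If there exists a sequence {T_n}_{n∈ℕ} of diagonal operators on H such that P(T_n) = H for all n and ‖T_n − T‖ → 0 as n → ∞, then T is unitary (and T is itself diagonal). -/
/-!
Every basis vector is periodic for the diagonal operator `Tₙ`, so its eigenvalue is a root of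
unity; diagonal operators with unimodular entries are unitary. Both the unitary operators and the
operators that are diagonal in the basis `e` form norm-closed sets, so the limit `T` inherits
both properties.
-/

open Filter Topology ComplexConjugate

namespace ContinuousLinearMap

variable {R M : Type*} [CommSemiring R] [TopologicalSpace M] [AddCommMonoid M] [Module R M]

theorem pow_apply_of_apply_eq_smul {f : M →L[R] M} {c : R} {v : M} (h : f v = c • v) (k : ℕ) :
    (f ^ k) v = c ^ k • v := by
  induction k with
  | zero => simp
  | succ k ih => rw [pow_succ, mul_apply_eq_comp, h, map_smul, ih, smul_smul, pow_succ']

theorem pow_eq_one_of_apply_eq_smul {K V : Type*} [Field K] [TopologicalSpace V]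
    [AddCommGroup V] [Module K V] {f : V →L[K] V} {c : K} {v : V} (h : f v = c • v)
    (hv : v ≠ 0) {m : ℕ} (hm : (f ^ m) v = v) : c ^ m = 1 := by
  have : (c ^ m - 1) • v = 0 := by
    rw [sub_smul, one_smul, ← pow_apply_of_apply_eq_smul h, hm, sub_self]
  exact sub_eq_zero.mp ((smul_eq_zero.mp this).resolve_right hv)

end ContinuousLinearMap

theorem isClosed_setOf_exists_forall_apply_eq_smul {ι 𝕜 E : Type*} [NontriviallyNormedField 𝕜]
    [CompleteSpace 𝕜] [NormedAddCommGroup E] [NormedSpace 𝕜 E] (v : ι → E) :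
    IsClosed {S : E →L[𝕜] E | ∃ α : ι → 𝕜, ∀ i, S (v i) = α i • v i} := by
  have : {S : E →L[𝕜] E | ∃ α : ι → 𝕜, ∀ i, S (v i) = α i • v i} =
      ⋂ i, (fun S : E →L[𝕜] E => S (v i)) ⁻¹' (𝕜 ∙ v i) := by
    ext S
    simp [Submodule.mem_span_singleton, Classical.skolem, eq_comm]
  rw [this]
  exact isClosed_iInter fun i =>
    (Submodule.closed_of_finiteDimensional _).preimage (continuous_eval_const _)

namespace HilbertBasis

variable {ι 𝕜 E : Type*} [RCLike 𝕜] [NormedAddCommGroup E] [InnerProductSpace 𝕜 E]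
  (b : HilbertBasis ι 𝕜 E)

theorem ext_continuousLinearMap {F : Type*} [TopologicalSpace F] [AddCommGroup F] [Module 𝕜 F]
    [T2Space F] {S T : E →L[𝕜] F} (h : ∀ i, S (b i) = T (b i)) : S = T :=
  ContinuousLinearMap.ext_on (Submodule.dense_iff_topologicalClosure_eq_top.mpr b.dense_span)
    (Set.forall_mem_range.mpr h)

variable {b} [CompleteSpace E] {S : E →L[𝕜] E} {α : ι → 𝕜}

theorem adjoint_apply_of_apply_eq_smul (hS : ∀ i, S (b i) = α i • b i) (i : ι) :
    S.adjoint (b i) = conj (α i) • b i := by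
  classical
  refine b.repr.injective (lp.ext (funext fun j => ?_))
  rw [b.repr_apply_apply, b.repr_apply_apply, ContinuousLinearMap.adjoint_inner_right, hS j,
    inner_smul_left, inner_smul_right, orthonormal_iff_ite.mp b.orthonormal]
  by_cases hji : j = i <;> simp [hji]

theorem mem_unitary_of_apply_eq_smul (hS : ∀ i, S (b i) = α i • b i) (hα : ∀ i, ‖α i‖ = 1) :
    S ∈ unitary (E →L[𝕜] E) := by
  have hS' := adjoint_apply_of_apply_eq_smul hS
  rw [Unitary.mem_iff, ContinuousLinearMap.star_eq_adjoint]
  constructor <;> refine b.ext_continuousLinearMap fun i => ?_ <;>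
    simp [hS, hS', smul_smul, RCLike.conj_mul, RCLike.mul_conj, hα]

end HilbertBasis

/-- If a bounded operator `T` on `H` is the operator-norm limit of a sequence of diagonal
operators each of which has every point of `H` periodic, then `T` is unitary (and `T` is
itself diagonal). -/
theorem unitary_of_limit_of_diagonal_with_all_points_periodic
    {H : Type*} [NormedAddCommGroup H] [InnerProductSpace ℂ H] [CompleteSpace H]
    (e : HilbertBasis ℕ ℂ H) (T : H →L[ℂ] H)
    (h : ∃ Tn : ℕ → (H →L[ℂ] H),
      (∀ n, ∃ α : ℕ → ℂ, ∀ j, Tn n (e j) = α j • e j) ∧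
      (∀ n, {x : H | ∃ m : ℕ, 0 < m ∧ ((Tn n) ^ m) x = x} = Set.univ) ∧
      Filter.Tendsto (fun n => ‖Tn n - T‖) Filter.atTop (nhds 0)) :
    T ∈ unitary (H →L[ℂ] H) ∧ ∃ α : ℕ → ℂ, ∀ n, T (e n) = α n • e n := by
  obtain ⟨Tn, hdiag, hper, hlim⟩ := h
  have hT : Tendsto Tn atTop (𝓝 T) := tendsto_iff_norm_sub_tendsto_zero.mpr hlim
  refine ⟨isClosed_unitary.mem_of_tendsto hT (Eventually.of_forall fun n => ?_),
    (isClosed_setOf_exists_forall_apply_eq_smul e).mem_of_tendsto hT (Eventually.of_forall hdiag)⟩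
  obtain ⟨α, hα⟩ := hdiag n
  refine e.mem_unitary_of_apply_eq_smul hα fun j => ?_
  obtain ⟨m, hm, hperiodic⟩ : e j ∈ {x : H | ∃ m : ℕ, 0 < m ∧ ((Tn n) ^ m) x = x} :=
    (hper n).symm ▸ Set.mem_univ _
  exact Complex.norm_eq_one_of_pow_eq_one
    (ContinuousLinearMap.pow_eq_one_of_apply_eq_smul (hα j) (e.orthonormal.ne_zero j) hperiodic)
    hm.ne'
end

section
/- Let H be an infinite-dimensional separable complex Hilbert space and let T be a compact normal operator on H. Then P(T) is a finite-dimensional subspace of H. -/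
/-!
For a normal operator `‖T y‖ = ‖T* y‖`, so `‖T y‖² = ⟪y, T* T y⟫ ≤ ‖y‖ ‖T² y‖`. Applied to
`y = T^k x` this says that `k ↦ log ‖T^k x‖` is a convex sequence; for a periodic point `x ≠ 0` it
is also periodic, hence constant, so `T` is isometric on the subspace `P(T)`. Since `T` is
compact, the unit ball of a subspace on which it is isometric is totally bounded, so by Riesz's
theorem that subspace is finite-dimensional.
-/

open Function

namespace Function.Periodic

theorem succ_eq_of_convex {a : ℕ → ℝ} {m : ℕ} (ha : Periodic a m) (hm : m ≠ 0)
    (hconv : ∀ k, 2 * a (k + 1) ≤ a k + a (k + 2)) (k : ℕ) : a (k + 1) = a k := by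
  set d : ℕ → ℝ := fun k ↦ a (k + 1) - a k with hd
  have hmono : Monotone d := monotone_nat_of_le_succ fun k ↦ by
    simp only [hd]; linarith [hconv k]
  have hdper : Periodic d m := fun k ↦ by simp only [hd, add_right_comm k m 1, ha _]
  have hconst : ∀ k, d k = d 0 := fun k ↦
    le_antisymm (hdper.nat_mul_eq k ▸ hmono (Nat.le_mul_of_pos_right k (Nat.pos_of_ne_zero hm)))
      (hmono k.zero_le)
  have htele : a m - a 0 = m * d 0 := by
    rw [← Finset.sum_range_sub a m]
    simp [← hd, hconst]
  have hd0 : d 0 = 0 := by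
    rw [ha.eq, sub_self, eq_comm, mul_eq_zero] at htele
    exact htele.resolve_left (Nat.cast_ne_zero.2 hm)
  linarith [hconst k]

theorem succ_eq_of_sq_le_mul {b : ℕ → ℝ} {m : ℕ} (hb : Periodic b m) (hm : m ≠ 0)
    (hpos : ∀ k, 0 < b k) (hconv : ∀ k, b (k + 1) ^ 2 ≤ b k * b (k + 2)) (k : ℕ) :
    b (k + 1) = b k := by
  refine Real.log_injOn_pos (hpos _) (hpos _) ((hb.comp Real.log).succ_eq_of_convex hm ?_ k)
  intro k
  simp only [comp_apply]
  have := Real.log_le_log (pow_pos (hpos (k + 1)) 2) (hconv k)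
  rwa [Real.log_pow, Real.log_mul (hpos k).ne' (hpos _).ne', Nat.cast_ofNat] at this

end Function.Periodic

def Submodule.periodicPts {R M F : Type*} [Semiring R] [AddCommMonoid M] [Module R M]
    [FunLike F M M] [LinearMapClass F R M M] (f : F) : Submodule R M where
  carrier := Function.periodicPts f
  add_mem' := by
    rintro x y ⟨m, hm, hx⟩ ⟨n, hn, hy⟩
    exact mk_mem_periodicPts (Nat.mul_pos hm hn)
      (((hx.mul_const n).prodMap (hy.const_mul m)).map (g := fun p : M × M ↦ p.1 + p.2)
        fun p ↦ (map_add f p.1 p.2).symm)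
  zero_mem' := mk_mem_periodicPts one_pos (map_zero f)
  smul_mem' c x := by
    rintro ⟨m, hm, hx⟩
    exact mk_mem_periodicPts hm (hx.map fun y ↦ (map_smul f c y).symm)

theorem FiniteDimensional.of_isCompactOperator_of_isUniformInducing
    (𝕜 : Type*) [NontriviallyNormedField 𝕜] [CompleteSpace 𝕜] {E F : Type*} [AddCommGroup E]
    [Module 𝕜 E] [UniformSpace E] [T2Space E] [IsUniformAddGroup E] [ContinuousSMul 𝕜 E]
    [UniformSpace F] {f : E → F} (hc : IsCompactOperator f) (hu : IsUniformInducing f) :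
    FiniteDimensional 𝕜 E :=
  let ⟨_, hK, hKf⟩ := hc
  of_totallyBounded_nhds_zero 𝕜 hKf (totallyBounded_preimage hu hK.totallyBounded)

namespace IsStarNormal

open ContinuousLinearMap

variable {𝕜 E : Type*} [RCLike 𝕜] [NormedAddCommGroup E] [InnerProductSpace 𝕜 E] [CompleteSpace E]
  {T : E →L[𝕜] E}

theorem sq_norm_apply_le (hT : IsStarNormal T) (x : E) :
    ‖T x‖ ^ 2 ≤ ‖x‖ * ‖T (T x)‖ :=
  calc ‖T x‖ ^ 2 = RCLike.re (inner 𝕜 x (adjoint T (T x))) := by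
        rw [adjoint_inner_right, inner_self_eq_norm_sq]
    _ ≤ ‖inner 𝕜 x (adjoint T (T x))‖ := RCLike.re_le_norm _
    _ ≤ ‖x‖ * ‖adjoint T (T x)‖ := norm_inner_le_norm _ _
    _ = ‖x‖ * ‖T (T x)‖ := by rw [← isStarNormal_iff_norm_eq_adjoint.mp hT]

theorem norm_apply_eq_of_mem_periodicPts (hT : IsStarNormal T) {x : E}
    (hx : x ∈ periodicPts T) : ‖T x‖ = ‖x‖ := by
  obtain ⟨m, hm, hxm⟩ := hx
  rcases eq_or_ne x 0 with rfl | hx0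
  · simp
  have hper : Periodic (fun k ↦ ‖T^[k] x‖) m := fun k ↦ by
    simp only [iterate_add_apply, hxm.eq]
  have hpos (k : ℕ) : 0 < ‖T^[k] x‖ := by
    have h0 : IsPeriodicPt T m 0 := IsFixedPt.isPeriodicPt (map_zero T) m
    refine norm_pos_iff.2 fun h ↦ hx0 ?_
    exact (hxm.iterate k).eq_of_apply_eq_same (h0.iterate k) hm
      (h.trans (iterate_map_zero T k).symm)
  have hconv (k : ℕ) : ‖T^[k + 1] x‖ ^ 2 ≤ ‖T^[k] x‖ * ‖T^[k + 2] x‖ := by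
    simpa only [iterate_succ_apply'] using hT.sq_norm_apply_le (T^[k] x)
  simpa using hper.succ_eq_of_sq_le_mul hm.ne' hpos hconv 0

end IsStarNormal

theorem compact_normal_periodic_points_finiteDimensional_general
    {H : Type*} [NormedAddCommGroup H] [InnerProductSpace ℂ H] [CompleteSpace H]
    (T : H →L[ℂ] H)
    (hN : IsStarNormal T) (hC : IsCompactOperator T) :
    FiniteDimensional ℂ
      (Submodule.span ℂ {x : H | ∃ m : ℕ, 0 < m ∧ (T ^ m) x = x}) := by
  set P := Submodule.periodicPts T
  have hset : {x : H | ∃ m : ℕ, 0 < m ∧ (T ^ m) x = x} = P := by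
    ext x
    simp [P, Submodule.periodicPts, mem_periodicPts, IsPeriodicPt, IsFixedPt]
  rw [hset, Submodule.span_eq]
  have hiso : Isometry (T ∘L P.subtypeL) :=
    AddMonoidHomClass.isometry_of_norm _ fun x ↦ hN.norm_apply_eq_of_mem_periodicPts x.2
  exact .of_isCompactOperator_of_isUniformInducing ℂ (hC.comp_clm P.subtypeL)
    hiso.isUniformInducing

/-- The set of periodic points of a compact normal operator on an infinite-dimensional
separable complex Hilbert space spans a finite-dimensional subspace. -/
theorem compact_normal_periodic_points_finiteDimensional
    {H : Type*} [NormedAddCommGroup H] [InnerProductSpace ℂ H] [CompleteSpace H]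
    (e : HilbertBasis ℕ ℂ H) (T : H →L[ℂ] H)
    (hN : IsStarNormal T) (hC : IsCompactOperator T) :
    FiniteDimensional ℂ
      (Submodule.span ℂ {x : H | ∃ m : ℕ, 0 < m ∧ (T ^ m) x = x}) :=
  compact_normal_periodic_points_finiteDimensional_general T hN hC
end
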